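/- arXiv:2102.03013 — 8 statements merged into one kernel-verified Lean document; each statement's English description precedes it below -/
import Mathlib

section
/- (Post-processing) Let P and Q be probability measures on a measurable space Ω and let κ be a Markov kernel from Ω to a measurable space Ω'. Then T(P‖Q) ⪯ T(P∘κ ‖ Q∘κ), where P∘κ denotes the probability measure on Ω' obtained by composing P with the kernel κ (i.e., (P∘κ)(A) = ∫ κ(x)(A) dP(x)). -/
open MeasureTheory ProbabilityTheory

/-- The tradeoff function `T(P‖Q)(α) = inf {1 − ∫ φ dQ : φ measurable, 0 ≤ φ ≤ 1, ∫ φ dP ≤ α}`. -/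
noncomputable def tradeoff {Ω : Type*} [MeasurableSpace Ω] (P Q : Measure Ω) (α : ℝ) : ℝ :=
  sInf { b : ℝ | ∃ φ : Ω → ℝ, Measurable φ ∧ (∀ x, φ x ∈ Set.Icc (0 : ℝ) 1) ∧
    (∫ x, φ x ∂P) ≤ α ∧ b = 1 - ∫ x, φ x ∂Q }

/-!
Post-processing a test `ψ` on `Ω'` by the kernel gives the test `x ↦ ∫ ψ d(κ x)` on `Ω`, which
has the same integrals under `P, Q` as `ψ` has under `P ∘ κ, Q ∘ κ`. So every value in the set
whose infimum is `T(P ∘ κ ‖ Q ∘ κ)(α)` is also a value in the set defining `T(P‖Q)(α)`, and the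
infimum over the larger set is smaller.
-/

section

variable {Ω Ω' : Type*} [MeasurableSpace Ω] [MeasurableSpace Ω']

lemma integral_le_measureReal_univ (μ : Measure Ω) [IsFiniteMeasure μ] {φ : Ω → ℝ}
    (hφ : Measurable φ) (h01 : ∀ x, φ x ∈ Set.Icc (0 : ℝ) 1) :
    ∫ x, φ x ∂μ ≤ μ.real Set.univ := by
  simpa using integral_mono (.of_mem_Icc 0 1 hφ.aemeasurable (.of_forall h01))
    (integrable_const (1 : ℝ)) fun x ↦ (h01 x).2

lemma integral_mem_unitInterval (μ : Measure Ω) [IsProbabilityMeasure μ] {φ : Ω → ℝ}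
    (hφ : Measurable φ) (h01 : ∀ x, φ x ∈ Set.Icc (0 : ℝ) 1) :
    ∫ x, φ x ∂μ ∈ Set.Icc (0 : ℝ) 1 :=
  ⟨integral_nonneg fun x ↦ (h01 x).1, by simpa using integral_le_measureReal_univ μ hφ h01⟩

lemma integral_bind_of_nonneg (μ : Measure Ω) (κ : Kernel Ω Ω') {f : Ω' → ℝ}
    (hf : Measurable f) (hf_nonneg : 0 ≤ f) (hf_int : ∀ x, Integrable f (κ x)) :
    ∫ y, f y ∂(μ.bind κ) = ∫ x, ∫ y, f y ∂(κ x) ∂μ := by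
  have h_inner (x : Ω) :
      ∫⁻ y, ENNReal.ofReal (f y) ∂(κ x) = ENNReal.ofReal (∫ y, f y ∂(κ x)) :=
    (ofReal_integral_eq_lintegral_ofReal (hf_int x) (.of_forall hf_nonneg)).symm
  rw [integral_eq_lintegral_of_nonneg_ae (.of_forall hf_nonneg) hf.aestronglyMeasurable,
    Measure.lintegral_bind κ.measurable.aemeasurable hf.ennreal_ofReal.aemeasurable,
    integral_eq_lintegral_of_nonneg_ae (.of_forall fun x ↦ integral_nonneg hf_nonneg)
      hf.stronglyMeasurable.integral_kernel.aestronglyMeasurable]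
  simp_rw [h_inner]

lemma tradeoff_le_tradeoff_of_forall_exists {P Q : Measure Ω} [IsFiniteMeasure Q]
    {P' Q' : Measure Ω'} {α : ℝ} (hα : 0 ≤ α)
    (h : ∀ ψ : Ω' → ℝ, Measurable ψ → (∀ y, ψ y ∈ Set.Icc (0 : ℝ) 1) → ∫ y, ψ y ∂P' ≤ α →
      ∃ φ : Ω → ℝ, Measurable φ ∧ (∀ x, φ x ∈ Set.Icc (0 : ℝ) 1) ∧ ∫ x, φ x ∂P ≤ α ∧
        ∫ x, φ x ∂Q = ∫ y, ψ y ∂Q') :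
    tradeoff P Q α ≤ tradeoff P' Q' α := by
  refine csInf_le_csInf ?bdd ⟨1, fun _ ↦ 0, measurable_const, fun _ ↦ ⟨le_rfl, zero_le_one⟩,
    by simpa using hα, by simp⟩ ?sub
  case bdd =>
    refine ⟨1 - Q.real Set.univ, ?_⟩
    rintro b ⟨φ, hφ, h01, -, rfl⟩
    linarith [integral_le_measureReal_univ Q hφ h01]
  case sub =>
    rintro b ⟨ψ, hψ, h01, hPψ, rfl⟩
    obtain ⟨φ, hφ, h01', hPφ, hQφ⟩ := h ψ hψ h01 hPψ
    exact ⟨φ, hφ, h01', hPφ, by rw [hQφ]⟩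

end

theorem tradeoff_post_processing_general {Ω Ω' : Type*} [MeasurableSpace Ω] [MeasurableSpace Ω']
    (P Q : Measure Ω) [IsProbabilityMeasure Q]
    (κ : Kernel Ω Ω') [IsMarkovKernel κ] :
    ∀ α ∈ Set.Icc (0 : ℝ) 1,
      tradeoff P Q α ≤ tradeoff (P.bind fun x => κ x) (Q.bind fun x => κ x) α := by
  intro α hα
  refine tradeoff_le_tradeoff_of_forall_exists hα.1 fun ψ hψ h01 hPψ ↦ ?_
  have hψ_int (x : Ω) : Integrable ψ (κ x) := .of_mem_Icc 0 1 hψ.aemeasurable (.of_forall h01)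
  have h_bind (μ : Measure Ω) : ∫ y, ψ y ∂(μ.bind κ) = ∫ x, ∫ y, ψ y ∂(κ x) ∂μ :=
    integral_bind_of_nonneg μ κ hψ (fun y ↦ (h01 y).1) hψ_int
  refine ⟨fun x ↦ ∫ y, ψ y ∂(κ x), hψ.stronglyMeasurable.integral_kernel.measurable,
    fun x ↦ integral_mem_unitInterval (κ x) hψ h01, h_bind P ▸ hPψ, (h_bind Q).symm⟩

/-- Post-processing: for any Markov kernel `κ`,
`T(P‖Q) ⪯ T(P∘κ‖Q∘κ)` pointwise on `[0,1]`. -/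
theorem tradeoff_post_processing {Ω Ω' : Type*} [MeasurableSpace Ω] [MeasurableSpace Ω']
    (P Q : Measure Ω) [IsProbabilityMeasure P] [IsProbabilityMeasure Q]
    (κ : Kernel Ω Ω') [IsMarkovKernel κ] :
    ∀ α ∈ Set.Icc (0 : ℝ) 1,
      tradeoff P Q α ≤ tradeoff (P.bind fun x => κ x) (Q.bind fun x => κ x) α :=
  tradeoff_post_processing_general P Q κ
end

section
/- (Sufficient statistic) Let P₁ and P₂ be probability measures on a measurable space Y and let κ be a Markov kernel from Y to a measurable space X. Let Q₁ = P₁ ⊗ κ and Q₂ = P₂ ⊗ κ be the joint probability measures on Y × X in which the first coordinate has law Pᵢ and, conditionally on the first coordinate being y, the second coordinate has law κ(y). Then T(Q₁‖Q₂) = T(P₁‖P₂), i.e., the two tradeoff functions agree at every α ∈ [0,1]. -/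
/-!
A test `ψ` on `Y × X` can be averaged over the kernel into the test `y ↦ ∫ ψ(y, x) dκ(y)` on `Y`,
and a test `φ` on `Y` lifts to the test `φ ∘ Prod.fst` on `Y × X`. By Fubini for `Pᵢ ⊗ₘ κ`,
both operations preserve the expectations under both measures, so the two optimisation
problems defining the tradeoff functions have the same sets of values.
-/

open MeasureTheory ProbabilityTheory

def IsTest {Ω : Type*} [MeasurableSpace Ω] (φ : Ω → ℝ) : Prop :=
  Measurable φ ∧ ∀ x, φ x ∈ Set.Icc (0 : ℝ) 1

namespace IsTest

variable {Ω Ω' : Type*} [MeasurableSpace Ω] [MeasurableSpace Ω'] {φ : Ω → ℝ}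

theorem integrable (hφ : IsTest φ) (μ : Measure Ω) [IsFiniteMeasure μ] : Integrable φ μ :=
  .of_mem_Icc 0 1 hφ.1.aemeasurable (.of_forall hφ.2)

theorem comp (hφ : IsTest φ) {f : Ω' → Ω} (hf : Measurable f) : IsTest (φ ∘ f) :=
  ⟨hφ.1.comp hf, fun x => hφ.2 (f x)⟩

theorem integral_kernel {ψ : Ω × Ω' → ℝ} (hψ : IsTest ψ) (κ : Kernel Ω Ω') [IsMarkovKernel κ] :
    IsTest fun y => ∫ x, ψ (y, x) ∂κ y := by
  refine ⟨(hψ.1.stronglyMeasurable.integral_kernel_prod_right' (κ := κ)).measurable, fun y => ?_⟩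
  have hsection : IsTest fun x => ψ (y, x) := hψ.comp measurable_prodMk_left
  refine ⟨integral_nonneg fun x => (hsection.2 x).1, ?_⟩
  calc ∫ x, ψ (y, x) ∂κ y ≤ ∫ _, (1 : ℝ) ∂κ y :=
        integral_mono (hsection.integrable _) (integrable_const 1) fun x => (hsection.2 x).2
    _ = 1 := by simp

end IsTest

theorem integral_compProd_comp_fst {Y X : Type*} [MeasurableSpace Y] [MeasurableSpace X]
    (μ : Measure Y) [SFinite μ] (κ : Kernel Y X) [IsMarkovKernel κ] {φ : Y → ℝ}
    (hφ : Measurable φ) : ∫ z, φ z.1 ∂(μ ⊗ₘ κ) = ∫ y, φ y ∂μ := by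
  rw [← integral_map measurable_fst.aemeasurable hφ.aestronglyMeasurable, ← Measure.fst,
    Measure.fst_compProd]

theorem tradeoff_eq_of_forall_isTest {Ω Ω' : Type*} [MeasurableSpace Ω] [MeasurableSpace Ω']
    {P Q : Measure Ω} {P' Q' : Measure Ω'}
    (h : ∀ φ : Ω → ℝ, IsTest φ →
      ∃ ψ : Ω' → ℝ, IsTest ψ ∧ ∫ x, ψ x ∂P' = ∫ x, φ x ∂P ∧ ∫ x, ψ x ∂Q' = ∫ x, φ x ∂Q)
    (h' : ∀ ψ : Ω' → ℝ, IsTest ψ →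
      ∃ φ : Ω → ℝ, IsTest φ ∧ ∫ x, φ x ∂P = ∫ x, ψ x ∂P' ∧ ∫ x, φ x ∂Q = ∫ x, ψ x ∂Q')
    (α : ℝ) : tradeoff P Q α = tradeoff P' Q' α := by
  unfold tradeoff
  congr 1
  ext b
  constructor
  · rintro ⟨φ, hm, h01, hsize, rfl⟩
    obtain ⟨ψ, hψ, hP, hQ⟩ := h φ ⟨hm, h01⟩
    exact ⟨ψ, hψ.1, hψ.2, hP ▸ hsize, hQ ▸ rfl⟩
  · rintro ⟨ψ, hm, h01, hsize, rfl⟩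
    obtain ⟨φ, hφ, hP, hQ⟩ := h' ψ ⟨hm, h01⟩
    exact ⟨φ, hφ.1, hφ.2, hP ▸ hsize, hQ ▸ rfl⟩

/-- Sufficient statistic: if `Qᵢ = Pᵢ ⊗ₘ κ` are the joint laws in which the
first coordinate has law `Pᵢ` and, conditionally on it being `y`, the second has law `κ y`,
then `T(Q₁‖Q₂) = T(P₁‖P₂)` on `[0,1]`. -/
theorem tradeoff_sufficient_statistic {Y X : Type*} [MeasurableSpace Y] [MeasurableSpace X]
    (P₁ P₂ : Measure Y) [IsProbabilityMeasure P₁] [IsProbabilityMeasure P₂]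
    (κ : Kernel Y X) [IsMarkovKernel κ] :
    ∀ α ∈ Set.Icc (0 : ℝ) 1,
      tradeoff (P₁ ⊗ₘ κ) (P₂ ⊗ₘ κ) α = tradeoff P₁ P₂ α := by
  intro α _
  refine tradeoff_eq_of_forall_isTest (fun ψ hψ => ?_) (fun φ hφ => ?_) α
  · exact ⟨_, hψ.integral_kernel κ, (Measure.integral_compProd (hψ.integrable _)).symm,
      (Measure.integral_compProd (hψ.integrable _)).symm⟩
  · exact ⟨_, hφ.comp measurable_fst, integral_compProd_comp_fst P₁ κ hφ.1,
      integral_compProd_comp_fst P₂ κ hφ.1⟩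
end

section
/- (Well-definedness of the composition operation ⊗) Let P₁, Q₁ be probability measures on a measurable space Ω₁, P₂, Q₂ probability measures on Ω₂, P₁', Q₁' probability measures on Ω₁', and P₂', Q₂' probability measures on Ω₂'. If T(P₁‖Q₁) = T(P₁'‖Q₁') and T(P₂‖Q₂) = T(P₂'‖Q₂') (as functions on [0,1]), then T(P₁ × P₂ ‖ Q₁ × Q₂) = T(P₁' × P₂' ‖ Q₁' × Q₂'), where × denotes the product of measures. In other words, the tradeoff function of a product of independent pairs depends only on the tradeoff functions of the individual pairs. -/
open MeasureTheory ProbabilityTheory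

/-!
Fubini turns a test `φ` for `P₁ × P₂` against `Q₁ × Q₂` into the family of tests
`φ(x, ·)` for `P₂` against `Q₂`, of levels `a x = ∫ φ(x, ·) dP₂`; hence
`T(P₁ × P₂‖Q₁ × Q₂)(α) = inf {∫ T(P₂‖Q₂)(a x) dQ₁(x) : a measurable, 0 ≤ a ≤ 1, ∫ a dP₁ ≤ α}`.
The inequality `≥` is pointwise optimality of each section. For `≤`, glue near-optimal tests
for `P₂` chosen at the countably many dyadic levels below `a`, and pass to the limit by
dominated convergence, using that `T(P₂‖Q₂)` is left-continuous on `(0, 1]`.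
The right-hand side sees `P₂, Q₂` only through `T(P₂‖Q₂)` on `[0, 1]`; the first factor is
handled by the symmetry of the product.
-/

open Set Filter Topology

section Tradeoff

variable {Ω : Type*} [MeasurableSpace Ω] {μ P Q : Measure Ω} {φ : Ω → ℝ} {α s t c : ℝ}

lemma integrable_of_mem_Icc [IsFiniteMeasure μ] (hφ : Measurable φ)
    (hI : ∀ x, φ x ∈ Icc (0 : ℝ) 1) : Integrable φ μ :=
  .of_bound hφ.aestronglyMeasurable 1 <| ae_of_all _ fun x => by
    rw [Real.norm_eq_abs, abs_le]
    exact ⟨by linarith [(hI x).1], (hI x).2⟩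

lemma integral_mem_Icc_of_mem_Icc [IsProbabilityMeasure μ] (hI : ∀ x, φ x ∈ Icc (0 : ℝ) 1) :
    ∫ x, φ x ∂μ ∈ Icc (0 : ℝ) 1 := by
  refine ⟨integral_nonneg fun x => (hI x).1, ?_⟩
  calc ∫ x, φ x ∂μ ≤ ∫ _, (1 : ℝ) ∂μ :=
        integral_mono_of_nonneg (ae_of_all _ fun x => (hI x).1) (integrable_const 1)
          (ae_of_all _ fun x => (hI x).2)
    _ = 1 := by simp

lemma tradeoff_le [IsProbabilityMeasure Q] (hφ : Measurable φ) (hI : ∀ x, φ x ∈ Icc (0 : ℝ) 1)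
    (hP : ∫ x, φ x ∂P ≤ α) : tradeoff P Q α ≤ 1 - ∫ x, φ x ∂Q := by
  refine csInf_le ⟨0, ?_⟩ ⟨φ, hφ, hI, hP, rfl⟩
  rintro _ ⟨ψ, -, hψI, -, rfl⟩
  linarith [(integral_mem_Icc_of_mem_Icc (μ := Q) hψI).2]

lemma exists_test_lt_tradeoff_add (hα : 0 ≤ α) {ε : ℝ} (hε : 0 < ε) :
    ∃ φ : Ω → ℝ, Measurable φ ∧ (∀ x, φ x ∈ Icc (0 : ℝ) 1) ∧ ∫ x, φ x ∂P ≤ α ∧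
      1 - ∫ x, φ x ∂Q < tradeoff P Q α + ε := by
  obtain ⟨_, ⟨φ, hφ, hI, hP, rfl⟩, hlt⟩ :=
    exists_lt_of_csInf_lt
      (by exact ⟨1, fun _ => 0, measurable_const, fun _ => by simp, by simpa using hα, by simp⟩)
      (lt_add_of_pos_right (tradeoff P Q α) hε)
  exact ⟨φ, hφ, hI, hP, hlt⟩

lemma le_tradeoff (hα : 0 ≤ α)
    (h : ∀ φ : Ω → ℝ, Measurable φ → (∀ x, φ x ∈ Icc (0 : ℝ) 1) → ∫ x, φ x ∂P ≤ α →
      c ≤ 1 - ∫ x, φ x ∂Q) :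
    c ≤ tradeoff P Q α :=
  le_of_forall_pos_le_add fun _ hε =>
    let ⟨φ, hφ, hI, hP, hlt⟩ := exists_test_lt_tradeoff_add (P := P) (Q := Q) hα hε
    (h φ hφ hI hP).trans hlt.le

lemma tradeoff_nonneg [IsProbabilityMeasure Q] : 0 ≤ tradeoff P Q α :=
  Real.sInf_nonneg <| by
    rintro _ ⟨φ, -, hI, -, rfl⟩
    linarith [(integral_mem_Icc_of_mem_Icc (μ := Q) hI).2]

lemma tradeoff_le_one [IsProbabilityMeasure Q] (hα : 0 ≤ α) : tradeoff P Q α ≤ 1 := by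
  simpa using tradeoff_le (P := P) (Q := Q) measurable_const (fun _ => ⟨le_rfl, zero_le_one⟩)
    (by simpa using hα)

lemma tradeoff_antitoneOn [IsProbabilityMeasure Q] : AntitoneOn (tradeoff P Q) (Ici 0) :=
  fun _ hs _ _ hst => le_tradeoff hs fun _ hφ hI hP => tradeoff_le hφ hI (hP.trans hst)

/-- Scaling a test at level `t` by `s / t` gives a test at level `s`. -/
lemma tradeoff_le_add_div [IsProbabilityMeasure Q] (hs : 0 ≤ s) (hst : s ≤ t) (ht : 0 < t) :
    tradeoff P Q s ≤ tradeoff P Q t + (t - s) / t := by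
  refine le_of_forall_pos_le_add fun ε hε => ?_
  obtain ⟨ψ, hψ, hI, hP, hQ⟩ := exists_test_lt_tradeoff_add (P := P) (Q := Q) ht.le hε
  have hc0 : 0 ≤ s / t := div_nonneg hs ht.le
  have hc1 : s / t ≤ 1 := (div_le_one ht).2 hst
  have hscaled := tradeoff_le (P := P) (Q := Q) (α := s) (hψ.const_mul (s / t))
    (fun x => ⟨mul_nonneg hc0 (hI x).1, mul_le_one₀ hc1 (hI x).1 (hI x).2⟩) <| by
      rw [integral_const_mul]
      calc s / t * ∫ x, ψ x ∂P ≤ s / t * t := mul_le_mul_of_nonneg_left hP hc0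
        _ = s := div_mul_cancel₀ s ht.ne'
  rw [integral_const_mul] at hscaled
  have hψQ := integral_mem_Icc_of_mem_Icc (μ := Q) hI
  have hsplit : (t - s) / t = 1 - s / t := by rw [sub_div, div_self ht.ne']
  rw [hsplit]
  nlinarith [hψQ.1, hψQ.2]

lemma continuousWithinAt_tradeoff_Icc [IsProbabilityMeasure Q] (ht : 0 ≤ t) :
    ContinuousWithinAt (tradeoff P Q) (Icc 0 t) t := by
  rcases ht.eq_or_lt with rfl | ht
  · simp [continuousWithinAt_singleton]
  have hupper : Tendsto (fun s => tradeoff P Q t + (t - s) / t) (𝓝[Icc 0 t] t)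
      (𝓝 (tradeoff P Q t)) := by
    refine tendsto_nhdsWithin_of_tendsto_nhds ?_
    simpa using (((continuous_const (y := t)).sub continuous_id).div_const t).tendsto t
      |>.const_add (tradeoff P Q t)
  refine tendsto_of_tendsto_of_tendsto_of_le_of_le' tendsto_const_nhds hupper ?_ ?_
  · exact eventually_nhdsWithin_of_forall fun s hs =>
      tradeoff_antitoneOn hs.1 ht.le hs.2
  · exact eventually_nhdsWithin_of_forall fun s hs => tradeoff_le_add_div hs.1 hs.2 ht

end Tradeoff

section Product

variable {Ω₁ Ω₂ Ω₂' : Type*} [MeasurableSpace Ω₁] [MeasurableSpace Ω₂] [MeasurableSpace Ω₂']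
  {P₁ Q₁ : Measure Ω₁} {P₂ Q₂ : Measure Ω₂} {α : ℝ}

lemma tradeoff_prod_comm [SFinite P₁] [SFinite Q₁] [SFinite P₂] [SFinite Q₂] :
    tradeoff (P₁.prod P₂) (Q₁.prod Q₂) α = tradeoff (P₂.prod P₁) (Q₂.prod Q₁) α := by
  refine congrArg sInf (Set.ext fun b => ⟨?_, ?_⟩)
  · rintro ⟨φ, hφ, hI, hP, rfl⟩
    refine ⟨fun z => φ z.swap, hφ.comp measurable_swap, fun z => hI _, ?_, ?_⟩
    · rwa [integral_prod_swap]
    · rw [integral_prod_swap]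
  · rintro ⟨φ, hφ, hI, hP, rfl⟩
    refine ⟨fun z => φ z.swap, hφ.comp measurable_swap, fun z => hI _, ?_, ?_⟩
    · rwa [integral_prod_swap]
    · rw [integral_prod_swap]

lemma tradeoff_prod_le_integral_of_countable [IsFiniteMeasure P₁] [IsProbabilityMeasure Q₁]
    [IsFiniteMeasure P₂] [IsProbabilityMeasure Q₂] {ι : Type*} [Countable ι] [MeasurableSpace ι]
    [MeasurableSingletonClass ι] {k : Ω₁ → ι} (hk : Measurable k) {L : ι → ℝ}
    (hL0 : ∀ i, 0 ≤ L i) (hL1 : ∀ x, L (k x) ≤ 1) (hα : ∫ x, L (k x) ∂P₁ ≤ α) :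
    tradeoff (P₁.prod P₂) (Q₁.prod Q₂) α ≤ ∫ x, tradeoff P₂ Q₂ (L (k x)) ∂Q₁ := by
  refine le_of_forall_pos_le_add fun ε hε => ?_
  choose ψ hψ hψI hψP hψQ using fun i =>
    exists_test_lt_tradeoff_add (P := P₂) (Q := Q₂) (hL0 i) hε
  set Φ : Ω₁ × Ω₂ → ℝ := fun z => ψ (k z.1) z.2
  have hΦ : Measurable Φ :=
    (measurable_from_prod_countable_left (f := fun q : Ω₂ × ι => ψ q.2 q.1) hψ).comp
      (measurable_snd.prodMk (hk.comp measurable_fst))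
  have hΦI (z : Ω₁ × Ω₂) : Φ z ∈ Icc (0 : ℝ) 1 := hψI _ _
  have hlevel : ∫ z, Φ z ∂(P₁.prod P₂) ≤ α := by
    rw [integral_prod Φ (integrable_of_mem_Icc hΦ hΦI)]
    refine le_trans (integral_mono_of_nonneg ?_ ?_ (ae_of_all _ fun x => hψP (k x))) hα
    · exact ae_of_all _ fun x => integral_nonneg fun y => (hψI (k x) y).1
    · exact integrable_of_mem_Icc ((measurable_of_countable L).comp hk)
        fun x => ⟨hL0 _, hL1 x⟩
  have hJ : Integrable (fun x => ∫ y, ψ (k x) y ∂Q₂) Q₁ :=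
    integrable_of_mem_Icc ((measurable_of_countable fun i => ∫ y, ψ i y ∂Q₂).comp hk)
      fun x => integral_mem_Icc_of_mem_Icc (hψI (k x))
  have hT : Integrable (fun x => tradeoff P₂ Q₂ (L (k x))) Q₁ :=
    integrable_of_mem_Icc ((measurable_of_countable fun i => tradeoff P₂ Q₂ (L i)).comp hk)
      fun x => ⟨tradeoff_nonneg, tradeoff_le_one (hL0 _)⟩
  calc tradeoff (P₁.prod P₂) (Q₁.prod Q₂) α ≤ 1 - ∫ z, Φ z ∂(Q₁.prod Q₂) :=
        tradeoff_le hΦ hΦI hlevel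
    _ = ∫ x, (1 - ∫ y, ψ (k x) y ∂Q₂) ∂Q₁ := by
        rw [integral_prod Φ (integrable_of_mem_Icc hΦ hΦI), integral_sub (integrable_const 1) hJ]
        simp [Φ]
    _ ≤ ∫ x, (tradeoff P₂ Q₂ (L (k x)) + ε) ∂Q₁ :=
        integral_mono ((integrable_const 1).sub hJ) (hT.add (integrable_const ε))
          fun x => (hψQ (k x)).le
    _ = ∫ x, tradeoff P₂ Q₂ (L (k x)) ∂Q₁ + ε := by
        rw [integral_add hT (integrable_const ε)]
        simp

lemma tradeoff_prod_le_integral [IsFiniteMeasure P₁] [IsProbabilityMeasure Q₁]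
    [IsFiniteMeasure P₂] [IsProbabilityMeasure Q₂] {a : Ω₁ → ℝ} (ha : Measurable a)
    (haI : ∀ x, a x ∈ Icc (0 : ℝ) 1) (hα : ∫ x, a x ∂P₁ ≤ α) :
    tradeoff (P₁.prod P₂) (Q₁.prod Q₂) α ≤ ∫ x, tradeoff P₂ Q₂ (a x) ∂Q₁ := by
  set k : ℕ → Ω₁ → ℕ := fun n x => ⌊a x * 2 ^ n⌋₊
  have hk (n : ℕ) : Measurable (k n) := (ha.mul_const _).nat_floor
  have hk_mem (n : ℕ) (x : Ω₁) : (k n x : ℝ) / 2 ^ n ∈ Icc 0 (a x) :=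
    ⟨by positivity, div_le_of_le_mul₀ (by positivity) (haI x).1 (Nat.floor_le (mul_nonneg (haI x).1 (by positivity)))⟩
  have hbound (n : ℕ) :
      tradeoff (P₁.prod P₂) (Q₁.prod Q₂) α ≤ ∫ x, tradeoff P₂ Q₂ (k n x / 2 ^ n) ∂Q₁ := by
    refine tradeoff_prod_le_integral_of_countable (hk n) (L := fun i : ℕ => (i : ℝ) / 2 ^ n)
      (fun i => by positivity)
      (fun x => (hk_mem n x).2.trans (haI x).2) (le_trans ?_ hα)
    refine integral_mono_of_nonneg (ae_of_all _ fun x => (hk_mem n x).1) ?_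
      (ae_of_all _ fun x => (hk_mem n x).2)
    exact integrable_of_mem_Icc ha haI
  have hk_tendsto (x : Ω₁) :
      Tendsto (fun n => (k n x : ℝ) / 2 ^ n) atTop (𝓝[Icc 0 (a x)] (a x)) :=
    tendsto_nhdsWithin_iff.2 ⟨(tendsto_nat_floor_mul_div_atTop (haI x).1).comp
      (tendsto_pow_atTop_atTop_of_one_lt one_lt_two), Eventually.of_forall (hk_mem · x)⟩
  have hlim : Tendsto (fun n => ∫ x, tradeoff P₂ Q₂ (k n x / 2 ^ n) ∂Q₁) atTop
      (𝓝 (∫ x, tradeoff P₂ Q₂ (a x) ∂Q₁)) := by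
    refine tendsto_integral_of_dominated_convergence (fun _ => 1)
      (fun n => ((measurable_of_countable fun i : ℕ => tradeoff P₂ Q₂ (i / 2 ^ n)).comp
        (hk n)).aestronglyMeasurable)
      (integrable_const 1) (fun n => ae_of_all _ fun x => ?_)
      (ae_of_all _ fun x => (continuousWithinAt_tradeoff_Icc (haI x).1).tendsto.comp
        (hk_tendsto x))
    rw [Real.norm_of_nonneg tradeoff_nonneg]
    exact tradeoff_le_one (hk_mem n x).1
  exact ge_of_tendsto' hlim hbound

lemma integral_tradeoff_section_le [IsProbabilityMeasure Q₁] [IsProbabilityMeasure Q₂]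
    {φ : Ω₁ × Ω₂ → ℝ} (hφ : Measurable φ) (hI : ∀ z, φ z ∈ Icc (0 : ℝ) 1) :
    ∫ x, tradeoff P₂ Q₂ (∫ y, φ (x, y) ∂P₂) ∂Q₁ ≤ 1 - ∫ z, φ z ∂(Q₁.prod Q₂) := by
  have hsection (x : Ω₁) : Measurable fun y => φ (x, y) := hφ.comp measurable_prodMk_left
  have hQsection : Integrable (fun x => ∫ y, φ (x, y) ∂Q₂) Q₁ :=
    integrable_of_mem_Icc hφ.stronglyMeasurable.integral_prod_right'.measurable
      fun x => integral_mem_Icc_of_mem_Icc fun y => hI _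
  rw [integral_prod φ (integrable_of_mem_Icc hφ hI)]
  calc ∫ x, tradeoff P₂ Q₂ (∫ y, φ (x, y) ∂P₂) ∂Q₁ ≤ ∫ x, (1 - ∫ y, φ (x, y) ∂Q₂) ∂Q₁ :=
        integral_mono_of_nonneg (ae_of_all _ fun _ => tradeoff_nonneg)
          ((integrable_const 1).sub hQsection)
          (ae_of_all _ fun x => tradeoff_le (hsection x) (fun y => hI _) le_rfl)
    _ = 1 - ∫ x, ∫ y, φ (x, y) ∂Q₂ ∂Q₁ := by
        rw [integral_sub (integrable_const 1) hQsection]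
        simp

lemma tradeoff_prod_le_of_eqOn [IsFiniteMeasure P₁] [IsProbabilityMeasure Q₁]
    [IsFiniteMeasure P₂] [IsProbabilityMeasure Q₂] {P₂' Q₂' : Measure Ω₂'}
    [IsProbabilityMeasure P₂'] [IsProbabilityMeasure Q₂']
    (h : EqOn (tradeoff P₂ Q₂) (tradeoff P₂' Q₂') (Icc 0 1)) (hα : 0 ≤ α) :
    tradeoff (P₁.prod P₂) (Q₁.prod Q₂) α ≤ tradeoff (P₁.prod P₂') (Q₁.prod Q₂') α := by
  refine le_tradeoff hα fun φ hφ hI hP => ?_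
  have hlevel (x : Ω₁) : ∫ y, φ (x, y) ∂P₂' ∈ Icc (0 : ℝ) 1 :=
    integral_mem_Icc_of_mem_Icc fun y => hI _
  calc tradeoff (P₁.prod P₂) (Q₁.prod Q₂) α
      ≤ ∫ x, tradeoff P₂ Q₂ (∫ y, φ (x, y) ∂P₂') ∂Q₁ :=
        tradeoff_prod_le_integral hφ.stronglyMeasurable.integral_prod_right'.measurable hlevel
          (by rwa [← integral_prod φ (integrable_of_mem_Icc hφ hI)])
    _ = ∫ x, tradeoff P₂' Q₂' (∫ y, φ (x, y) ∂P₂') ∂Q₁ :=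
        integral_congr_ae (ae_of_all _ fun x => h (hlevel x))
    _ ≤ 1 - ∫ z, φ z ∂(Q₁.prod Q₂') := integral_tradeoff_section_le hφ hI

lemma tradeoff_prod_congr_right [IsFiniteMeasure P₁] [IsProbabilityMeasure Q₁]
    [IsProbabilityMeasure P₂] [IsProbabilityMeasure Q₂] {P₂' Q₂' : Measure Ω₂'}
    [IsProbabilityMeasure P₂'] [IsProbabilityMeasure Q₂']
    (h : EqOn (tradeoff P₂ Q₂) (tradeoff P₂' Q₂') (Icc 0 1)) (hα : 0 ≤ α) :
    tradeoff (P₁.prod P₂) (Q₁.prod Q₂) α = tradeoff (P₁.prod P₂') (Q₁.prod Q₂') α :=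
  (tradeoff_prod_le_of_eqOn h hα).antisymm (tradeoff_prod_le_of_eqOn h.symm hα)

end Product

/-- Well-definedness of composition: the tradeoff function of a product of
independent pairs depends only on the tradeoff functions of the individual pairs. -/
theorem tradeoff_prod_well_defined
    {Ω₁ Ω₂ Ω₁' Ω₂' : Type*} [MeasurableSpace Ω₁] [MeasurableSpace Ω₂]
    [MeasurableSpace Ω₁'] [MeasurableSpace Ω₂']
    (P₁ Q₁ : Measure Ω₁) [IsProbabilityMeasure P₁] [IsProbabilityMeasure Q₁]
    (P₂ Q₂ : Measure Ω₂) [IsProbabilityMeasure P₂] [IsProbabilityMeasure Q₂]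
    (P₁' Q₁' : Measure Ω₁') [IsProbabilityMeasure P₁'] [IsProbabilityMeasure Q₁']
    (P₂' Q₂' : Measure Ω₂') [IsProbabilityMeasure P₂'] [IsProbabilityMeasure Q₂']
    (h1 : ∀ α ∈ Set.Icc (0 : ℝ) 1, tradeoff P₁ Q₁ α = tradeoff P₁' Q₁' α)
    (h2 : ∀ α ∈ Set.Icc (0 : ℝ) 1, tradeoff P₂ Q₂ α = tradeoff P₂' Q₂' α) :
    ∀ α ∈ Set.Icc (0 : ℝ) 1,
      tradeoff (P₁.prod P₂) (Q₁.prod Q₂) α = tradeoff (P₁'.prod P₂') (Q₁'.prod Q₂') α := by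
  intro α hα
  calc tradeoff (P₁.prod P₂) (Q₁.prod Q₂) α
      = tradeoff (P₂.prod P₁) (Q₂.prod Q₁) α := tradeoff_prod_comm
    _ = tradeoff (P₂.prod P₁') (Q₂.prod Q₁') α := tradeoff_prod_congr_right h1 hα.1
    _ = tradeoff (P₁'.prod P₂) (Q₁'.prod Q₂) α := tradeoff_prod_comm
    _ = tradeoff (P₁'.prod P₂') (Q₁'.prod Q₂') α := tradeoff_prod_congr_right h2 hα.1
end

section
/- (Neyman–Pearson parametrization of the tradeoff function) Let P and Q be probability measures on a measurable space Ω such that Q is absolutely continuous with respect to P, and let h = dQ/dP be the Radon–Nikodym derivative. Assume the pushforward of P under h is atomless, i.e., P({x : h(x) = t}) = 0 for every t ∈ ℝ. For t ≥ 0 define α(t) = P({x : h(x) ≥ t}) and β(t) = Q({x : h(x) < t}). Then T(P‖Q)(α(t)) = β(t) for every t ≥ 0; that is, the infimum defining the tradeoff function is attained by the likelihood-ratio threshold tests. -/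
open MeasureTheory ProbabilityTheory

/-!
For a test `φ` with `0 ≤ φ ≤ 1` and `t ≥ 0`, the function `(h⁺ - t) φ` lies
pointwise below `(h⁺ - t) 𝟙_{h ≥ t}`. Integrating against `P` gives
`∫ φ dQ - t ∫ φ dP ≤ Q(h ≥ t) - t P(h ≥ t)`, so every test of size at most `P(h ≥ t)` has power
at most that of the threshold test `𝟙_{h ≥ t}`, whose type II error is `Q(h < t)`.
-/

section

variable {Ω : Type*} [MeasurableSpace Ω]

lemma integral_withDensity_ofReal {μ : Measure Ω} {f : Ω → ℝ} (hf : Measurable f)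
    (φ : Ω → ℝ) :
    ∫ x, φ x ∂μ.withDensity (fun x => ENNReal.ofReal (f x)) = ∫ x, max (f x) 0 * φ x ∂μ := by
  rw [integral_withDensity_eq_integral_toReal_smul hf.ennreal_ofReal
    (ae_of_all _ fun _ => ENNReal.ofReal_lt_top)]
  simp only [ENNReal.toReal_ofReal', smul_eq_mul]

lemma integrable_max_zero_of_isFiniteMeasure_withDensity {μ : Measure Ω} {f : Ω → ℝ}
    (hf : Measurable f) [IsFiniteMeasure (μ.withDensity fun x => ENNReal.ofReal (f x))] :
    Integrable (fun x => max (f x) 0) μ := by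
  refine integrable_toReal_of_lintegral_ne_top hf.ennreal_ofReal.aemeasurable ?_
  rw [← setLIntegral_univ, ← withDensity_apply _ MeasurableSet.univ]
  exact measure_ne_top _ _

/-- The Neyman–Pearson lemma, for the likelihood ratio `g`. -/
lemma integral_mul_le_setIntegral_of_threshold {μ : Measure Ω} [IsFiniteMeasure μ]
    {g φ : Ω → ℝ} {s : Set Ω} {t : ℝ} (hg : Integrable g μ) (hφm : AEStronglyMeasurable φ μ)
    (hφ : ∀ x, φ x ∈ Set.Icc (0 : ℝ) 1) (hs : MeasurableSet s) (ht : 0 ≤ t)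
    (hge : ∀ x ∈ s, t ≤ g x) (hle : ∀ x ∉ s, g x ≤ t) (hφs : ∫ x, φ x ∂μ ≤ μ.real s) :
    ∫ x, g x * φ x ∂μ ≤ ∫ x in s, g x ∂μ := by
  have hφ1 : ∀ᵐ x ∂μ, ‖φ x‖ ≤ 1 := ae_of_all _ fun x => by
    rw [Real.norm_eq_abs, abs_le]
    exact ⟨by linarith [(hφ x).1], (hφ x).2⟩
  have hφi : Integrable φ μ := .of_bound hφm 1 hφ1
  have hgφ : Integrable (fun x => g x * φ x) μ := hg.mul_bdd hφm hφ1
  have hpt : ∀ x, g x * φ x - t * φ x ≤ s.indicator (fun x => g x - t) x := by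
    intro x
    by_cases hx : x ∈ s
    · rw [Set.indicator_of_mem hx]
      nlinarith [mul_nonneg (sub_nonneg.2 (hge x hx)) (sub_nonneg.2 (hφ x).2)]
    · rw [Set.indicator_of_notMem hx]
      nlinarith [mul_nonneg (sub_nonneg.2 (hle x hx)) (hφ x).1]
  have hmono : ∫ x, (g x * φ x - t * φ x) ∂μ ≤ ∫ x, s.indicator (fun x => g x - t) x ∂μ :=
    integral_mono (hgφ.sub (hφi.const_mul t)) ((hg.sub (integrable_const t)).indicator hs) hpt
  rw [integral_sub hgφ (hφi.const_mul t), integral_const_mul, integral_indicator hs,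
    integral_sub hg.integrableOn (integrable_const t), setIntegral_const, smul_eq_mul] at hmono
  linarith [mul_le_mul_of_nonneg_left hφs ht]

lemma tradeoff_eq_of_forall_integral_le {P Q : Measure Ω} {α : ℝ} {φ₀ : Ω → ℝ}
    (hm : Measurable φ₀) (h01 : ∀ x, φ₀ x ∈ Set.Icc (0 : ℝ) 1) (hα : ∫ x, φ₀ x ∂P ≤ α)
    (hmax : ∀ φ : Ω → ℝ, Measurable φ → (∀ x, φ x ∈ Set.Icc (0 : ℝ) 1) →
      ∫ x, φ x ∂P ≤ α → ∫ x, φ x ∂Q ≤ ∫ x, φ₀ x ∂Q) :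
    tradeoff P Q α = 1 - ∫ x, φ₀ x ∂Q := by
  refine IsLeast.csInf_eq ⟨⟨φ₀, hm, h01, hα, rfl⟩, ?_⟩
  rintro b ⟨φ, hφm, hφ, hφα, rfl⟩
  linarith [hmax φ hφm hφ hφα]

end

theorem tradeoff_neyman_pearson_general {Ω : Type*} [MeasurableSpace Ω]
    (P Q : Measure Ω) [IsProbabilityMeasure P] [IsProbabilityMeasure Q]
    (h : Ω → ℝ) (hh : Measurable h)
    (hdens : Q = P.withDensity fun x => ENNReal.ofReal (h x)) :
    ∀ t : ℝ, 0 ≤ t →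
      tradeoff P Q (P {x | t ≤ h x}).toReal = (Q {x | h x < t}).toReal := by
  intro t ht
  set s : Set Ω := {x | t ≤ h x}
  have hs : MeasurableSet s := measurableSet_le measurable_const hh
  have hQ (φ : Ω → ℝ) : ∫ x, φ x ∂Q = ∫ x, max (h x) 0 * φ x ∂P := by
    rw [hdens]; exact integral_withDensity_ofReal hh φ
  have hint : Integrable (fun x => max (h x) 0) P := by
    subst hdens; exact integrable_max_zero_of_isFiniteMeasure_withDensity hh
  have hind01 (x : Ω) : s.indicator 1 x ∈ Set.Icc (0 : ℝ) 1 := by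
    by_cases hx : x ∈ s <;> simp [hx]
  have hindQ : ∫ x, s.indicator 1 x ∂Q = ∫ x in s, max (h x) 0 ∂P := by
    rw [hQ, ← integral_indicator hs]
    congr 1 with x
    by_cases hx : x ∈ s <;> simp [hx]
  rw [show {x | h x < t} = sᶜ by ext; simp [s], ← measureReal_def, ← measureReal_def,
    probReal_compl_eq_one_sub hs,
    tradeoff_eq_of_forall_integral_le (measurable_one.indicator hs) hind01
      (integral_indicator_one hs).le, integral_indicator_one hs]
  intro φ hφm hφ hφs
  rw [hQ, hindQ]
  exact integral_mul_le_setIntegral_of_threshold hint hφm.aestronglyMeasurable hφ hs ht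
    (fun x hx => hx.trans (le_max_left _ _)) (fun x hx => max_le (not_le.1 hx).le ht) hφs

/-- Neyman–Pearson parametrization: if `Q` has density `h = dQ/dP` w.r.t. `P`
and the law of `h` under `P` is atomless, then with `α(t) = P(h ≥ t)` and `β(t) = Q(h < t)`
we have `T(P‖Q)(α(t)) = β(t)` for all `t ≥ 0`. -/
theorem tradeoff_neyman_pearson {Ω : Type*} [MeasurableSpace Ω]
    (P Q : Measure Ω) [IsProbabilityMeasure P] [IsProbabilityMeasure Q]
    (h : Ω → ℝ) (hh : Measurable h)
    (hdens : Q = P.withDensity fun x => ENNReal.ofReal (h x))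
    (hatomless : ∀ t : ℝ, P {x | h x = t} = 0) :
    ∀ t : ℝ, 0 ≤ t →
      tradeoff P Q (P {x | t ≤ h x}).toReal = (Q {x | h x < t}).toReal :=
  tradeoff_neyman_pearson_general P Q h hh hdens
end

section
/- (Duality between f-DP and (ε,δ)-DP, one tangent line) Let P and Q be probability measures on a measurable space Ω and let f : [0,1] → [0,1] be a convex function with T(P‖Q) ⪰ f (pointwise). Suppose f is differentiable at a point α ∈ [0,1] with f'(α) ≤ −1, and set ε = log(−f'(α)) and δ = 1 − f(α) + α·f'(α). Then for every measurable set S ⊆ Ω, Q(S) ≤ e^ε · P(S) + δ. -/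
open MeasureTheory ProbabilityTheory

/-!
Testing with the indicator of `S` at level `a = P(S)` gives `f(a) ≤ T(P‖Q)(a) ≤ 1 - Q(S)`.
Convexity puts the tangent line at `α` below `f`, so `f(α) + f'(α)(a - α) ≤ 1 - Q(S)`,
which rearranges to `Q(S) ≤ -f'(α) P(S) + δ`, and `e^ε = -f'(α)`.
-/

lemma ConvexOn.add_mul_sub_le_of_hasDerivAt {D : Set ℝ} {f : ℝ → ℝ} {x y f' : ℝ}
    (hf : ConvexOn ℝ D f) (hx : x ∈ D) (hy : y ∈ D) (hderiv : HasDerivAt f f' x) :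
    f x + f' * (y - x) ≤ f y := by
  rcases lt_trichotomy y x with hyx | rfl | hxy
  · have hslope := hf.slope_le_of_hasDerivAt hy hx hyx hderiv
    rw [slope_def_field, div_le_iff₀ (sub_pos.mpr hyx)] at hslope
    linarith
  · simp
  · have hslope := hf.le_slope_of_hasDerivAt hx hy hxy hderiv
    rw [slope_def_field, le_div_iff₀ (sub_pos.mpr hxy)] at hslope
    linarith

section Tradeoff

variable {Ω : Type*} [MeasurableSpace Ω] {P Q : Measure Ω}

lemma tradeoff_le_one_sub_integral [IsFiniteMeasure Q] {α : ℝ} {φ : Ω → ℝ}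
    (hφ : Measurable φ) (hφ01 : ∀ x, φ x ∈ Set.Icc (0 : ℝ) 1) (hφP : ∫ x, φ x ∂P ≤ α) :
    tradeoff P Q α ≤ 1 - ∫ x, φ x ∂Q := by
  refine csInf_le ⟨1 - Q.real Set.univ, ?_⟩ ⟨φ, hφ, hφ01, hφP, rfl⟩
  rintro b ⟨ψ, hψ, hψ01, -, rfl⟩
  have hψQ : Integrable ψ Q :=
    (integrable_const (1 : ℝ)).mono' hψ.aestronglyMeasurable
      (Filter.Eventually.of_forall fun x => by
        rw [Real.norm_eq_abs, abs_of_nonneg (hψ01 x).1]; exact (hψ01 x).2)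
  have hψ_le : ∫ x, ψ x ∂Q ≤ ∫ _, (1 : ℝ) ∂Q :=
    integral_mono hψQ (integrable_const 1) fun x => (hψ01 x).2
  rw [integral_const, smul_eq_mul, mul_one] at hψ_le
  linarith

lemma tradeoff_measureReal_le [IsFiniteMeasure Q] {S : Set Ω} (hS : MeasurableSet S) :
    tradeoff P Q (P.real S) ≤ 1 - Q.real S := by
  have hS01 : ∀ x, S.indicator 1 x ∈ Set.Icc (0 : ℝ) 1 := fun x => by
    by_cases hx : x ∈ S <;> simp [hx]
  simpa [integral_indicator_one hS] using
    tradeoff_le_one_sub_integral (P := P) (α := P.real S)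
      (measurable_one.indicator hS) hS01 (integral_indicator_one hS).le

end Tradeoff

/-- Duality between f-DP and (ε,δ)-DP, one tangent line: if `T(P‖Q) ⪰ f` with
`f` convex on `[0,1]`, differentiable at `α` with `f'(α) ≤ −1`, then with
`ε = log(−f'(α))` and `δ = 1 − f(α) + α f'(α)` every measurable `S` satisfies
`Q(S) ≤ e^ε P(S) + δ`. -/
theorem tradeoff_duality_tangent {Ω : Type*} [MeasurableSpace Ω]
    (P Q : Measure Ω) [IsProbabilityMeasure P] [IsProbabilityMeasure Q]
    (f : ℝ → ℝ) (hconv : ConvexOn ℝ (Set.Icc 0 1) f)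
    (hfDP : ∀ α ∈ Set.Icc (0 : ℝ) 1, f α ≤ tradeoff P Q α)
    (α s : ℝ) (hα : α ∈ Set.Icc (0 : ℝ) 1) (hderiv : HasDerivAt f s α) (hs : s ≤ -1) :
    ∀ S : Set Ω, MeasurableSet S →
      (Q S).toReal ≤ Real.exp (Real.log (-s)) * (P S).toReal + (1 - f α + α * s) := by
  intro S hS
  rw [Real.exp_log (by linarith)]
  have hPS : P.real S ∈ Set.Icc (0 : ℝ) 1 := ⟨measureReal_nonneg, measureReal_le_one⟩
  have htangent := hconv.add_mul_sub_le_of_hasDerivAt hα hPS hderiv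
  have hQS : f (P.real S) ≤ 1 - Q.real S := (hfDP _ hPS).trans (tradeoff_measureReal_le hS)
  change Q.real S ≤ -s * P.real S + (1 - f α + α * s)
  linarith
end

section
/- Let Z be a real random variable with Z > 0 almost surely and let G be a standard normal random variable independent of Z. Let P be the law of the pair (Z, G) on ℝ² and let Q be the law of the pair (Z, Z + G) on ℝ². For t ∈ ℝ define α(t) = E[Φ(−t/Z − Z/2)] and β(t) = E[Φ(t/Z − Z/2)], where Φ is the standard normal CDF. Then the tradeoff function f = T(P‖Q) satisfies f(α(t)) = β(t) for every t ∈ ℝ. -/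
/-!
Given `Z = z`, the density of `N(z, 1)` with respect to `N(0, 1)` at `x` is
`exp (z x - z² / 2)`, so `Q` has density `L (z, x) = exp (z x - z² / 2)` with respect to `P`.
By the Neyman–Pearson lemma the test rejecting on `{log L ≥ t} = {z x ≥ t + z² / 2}` is most
powerful at its own level. Integrating out the Gaussian coordinate, this region has
`P`-probability `E Φ(-t/Z - Z/2) = α(t)` and `Q`-probability `E Φ(Z/2 - t/Z) = 1 - β(t)`.
-/

open MeasureTheory ProbabilityTheory

/-- The standard normal CDF `Φ(x) = (1/√(2π)) ∫_{−∞}^x e^{−u²/2} du`. -/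
noncomputable def stdGaussianCDF (x : ℝ) : ℝ :=
  (1 / Real.sqrt (2 * Real.pi)) * ∫ u in Set.Iic x, Real.exp (-u ^ 2 / 2)

open Set
open scoped NNReal ENNReal

section NeymanPearson

lemma indicator_one_mem_Icc {α : Type*} (S : Set α) (x : α) :
    S.indicator (1 : α → ℝ) x ∈ Icc (0 : ℝ) 1 := by
  by_cases hx : x ∈ S <;> simp [hx]

variable {α : Type*} [MeasurableSpace α]

lemma integrable_of_forall_mem_Icc {μ : Measure α} [IsFiniteMeasure μ] {f : α → ℝ}
    (hf : Measurable f) (h01 : ∀ x, f x ∈ Icc (0 : ℝ) 1) : Integrable f μ :=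
  .of_bound hf.aestronglyMeasurable 1 <| ae_of_all _ fun x => by
    rw [Real.norm_of_nonneg (h01 x).1]
    exact (h01 x).2

lemma tradeoff_eq_of_forall_integral_le_s12 {P Q : Measure α} {a : ℝ} {ψ : α → ℝ}
    (hψ : Measurable ψ) (hψ01 : ∀ x, ψ x ∈ Icc (0 : ℝ) 1) (iψP : ∫ x, ψ x ∂P ≤ a)
    (hmax : ∀ φ : α → ℝ, Measurable φ → (∀ x, φ x ∈ Icc (0 : ℝ) 1) → ∫ x, φ x ∂P ≤ a →
      ∫ x, φ x ∂Q ≤ ∫ x, ψ x ∂Q) :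
    tradeoff P Q a = 1 - ∫ x, ψ x ∂Q := by
  refine IsLeast.csInf_eq ⟨⟨ψ, hψ, hψ01, iψP, rfl⟩, ?_⟩
  rintro _ ⟨φ, hφ, hφ01, hφP, rfl⟩
  linarith [hmax φ hφ hφ01 hφP]

/-- The Neyman–Pearson lemma. -/
theorem integral_le_measureReal_of_likelihoodRatio {P : Measure α} [IsFiniteMeasure P]
    {L : α → ℝ≥0} (hL : Measurable L) [IsFiniteMeasure (P.withDensity fun x => L x)]
    {S : Set α} (hS : MeasurableSet S) {k : ℝ} (hk : 0 ≤ k)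
    (hLS : ∀ x ∈ S, k ≤ L x) (hLSc : ∀ x ∉ S, (L x : ℝ) ≤ k)
    {φ : α → ℝ} (hφ : Measurable φ) (hφ01 : ∀ x, φ x ∈ Icc (0 : ℝ) 1)
    (hφP : ∫ x, φ x ∂P ≤ P.real S) :
    ∫ x, φ x ∂(P.withDensity fun x => L x) ≤ (P.withDensity fun x => L x).real S := by
  set Q := P.withDensity fun x => (L x : ℝ≥0∞)
  set ψ := S.indicator (1 : α → ℝ)
  have hψ : Measurable ψ := measurable_one.indicator hS
  have iφP := integrable_of_forall_mem_Icc (μ := P) hφ hφ01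
  have iφQ := integrable_of_forall_mem_Icc (μ := Q) hφ hφ01
  have iψP := integrable_of_forall_mem_Icc (μ := P) hψ (indicator_one_mem_Icc S)
  have iψQ := integrable_of_forall_mem_Icc (μ := Q) hψ (indicator_one_mem_Icc S)
  -- `ψ = 1 ≥ φ` where `L ≥ k` and `ψ = 0 ≤ φ` where `L ≤ k`
  have hpt (x : α) : (L x : ℝ) * (φ x - ψ x) ≤ k * (φ x - ψ x) := by
    by_cases hx : x ∈ S
    · have : φ x - ψ x ≤ 0 := by simp [ψ, hx, (hφ01 x).2]
      nlinarith [hLS x hx]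
    · have : 0 ≤ φ x - ψ x := by simp [ψ, hx, (hφ01 x).1]
      nlinarith [hLSc x hx]
  have hLD : Integrable (fun x => (L x : ℝ) * (φ x - ψ x)) P :=
    (integrable_withDensity_iff_integrable_smul hL).1 (iφQ.sub iψQ)
  suffices ∫ x, φ x ∂Q - Q.real S ≤ 0 by linarith
  calc ∫ x, φ x ∂Q - Q.real S
      = ∫ x, (L x : ℝ) * (φ x - ψ x) ∂P := by
        rw [← integral_indicator_one hS, ← integral_sub iφQ iψQ,
          integral_withDensity_eq_integral_smul hL]
        rfl
    _ ≤ ∫ x, k * (φ x - ψ x) ∂P := integral_mono hLD ((iφP.sub iψP).const_mul k) hpt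
    _ = k * (∫ x, φ x ∂P - P.real S) := by
        rw [integral_const_mul, integral_sub iφP iψP, integral_indicator_one hS]
    _ ≤ 0 := mul_nonpos_of_nonneg_of_nonpos hk (by linarith)

theorem tradeoff_measureReal_eq_of_likelihoodRatio {P Q : Measure α} [IsFiniteMeasure P]
    [IsFiniteMeasure Q] {L : α → ℝ≥0} (hL : Measurable L) (hQ : Q = P.withDensity fun x => L x)
    {S : Set α} (hS : MeasurableSet S) {k : ℝ} (hk : 0 ≤ k)
    (hLS : ∀ x ∈ S, k ≤ L x) (hLSc : ∀ x ∉ S, (L x : ℝ) ≤ k) :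
    tradeoff P Q (P.real S) = 1 - Q.real S := by
  subst hQ
  rw [tradeoff_eq_of_forall_integral_le_s12 (measurable_one.indicator hS) (indicator_one_mem_Icc S)
    (integral_indicator_one hS).le, integral_indicator_one hS]
  intro φ hφ hφ01 hφP
  rw [integral_indicator_one hS]
  exact integral_le_measureReal_of_likelihoodRatio hL hS hk hLS hLSc hφ hφ01 hφP

end NeymanPearson

section Gaussian

lemma stdGaussianCDF_eq_cdf : stdGaussianCDF = cdf (gaussianReal 0 1) := by
  funext x
  rw [cdf_eq_real, measureReal_def, gaussianReal_apply_eq_integral 0 one_ne_zero,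
    ENNReal.toReal_ofReal (integral_nonneg fun u => gaussianPDFReal_nonneg _ _ _)]
  unfold stdGaussianCDF gaussianPDFReal
  rw [integral_const_mul]
  norm_num

@[fun_prop]
lemma measurable_stdGaussianCDF : Measurable stdGaussianCDF := by
  rw [stdGaussianCDF_eq_cdf]
  exact (cdf _).mono.measurable

lemma stdGaussianCDF_mem_Icc (x : ℝ) : stdGaussianCDF x ∈ Icc (0 : ℝ) 1 := by
  rw [stdGaussianCDF_eq_cdf]
  exact ⟨cdf_nonneg _ x, cdf_le_one _ x⟩

lemma gaussianReal_real_Ici (x : ℝ) :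
    (gaussianReal 0 1).real (Ici x) = stdGaussianCDF (-x) := by
  have hpre : Neg.neg ⁻¹' Ici x = Iic (-x) := by
    ext y
    simp
  conv_lhs => rw [← neg_zero, ← gaussianReal_map_neg]
  rw [map_measureReal_apply measurable_neg measurableSet_Ici, hpre, stdGaussianCDF_eq_cdf,
    cdf_eq_real]

lemma stdGaussianCDF_neg (x : ℝ) : stdGaussianCDF (-x) = 1 - stdGaussianCDF x := by
  have := nullSingletonClass_gaussianReal (μ := 0) one_ne_zero
  rw [← gaussianReal_real_Ici, ← measureReal_congr Ioi_ae_eq_Ici, ← compl_Iic,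
    probReal_compl_eq_one_sub measurableSet_Iic, stdGaussianCDF_eq_cdf, cdf_eq_real]

lemma gaussianReal_real_setOf_le_mul {z : ℝ} (hz : 0 < z) (a : ℝ) :
    (gaussianReal 0 1).real {x | a ≤ z * x} = stdGaussianCDF (-(a / z)) := by
  rw [← gaussianReal_real_Ici]
  congr 1
  ext x
  simp [div_le_iff₀' hz]

lemma gaussianReal_eq_withDensity_exp (z : ℝ) :
    gaussianReal z 1 = (gaussianReal 0 1).withDensity
      (fun x => ENNReal.ofReal (Real.exp (z * x - z ^ 2 / 2))) := by
  rw [gaussianReal_of_var_ne_zero z one_ne_zero, gaussianReal_of_var_ne_zero 0 one_ne_zero,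
    ← withDensity_mul _ (measurable_gaussianPDF _ _) (by fun_prop)]
  congr 1 with x
  simp only [gaussianPDF_def, Pi.mul_apply, gaussianPDFReal_def]
  rw [← ENNReal.ofReal_mul (by positivity), mul_assoc _ (Real.exp _), ← Real.exp_add]
  congr 3
  push_cast
  ring

end Gaussian

section ShearedGaussianPair

variable (ν : Measure ℝ)

lemma map_shear_prod_gaussianReal [SFinite ν] :
    (ν.prod (gaussianReal 0 1)).map (fun p : ℝ × ℝ => (p.1, p.1 + p.2)) =
      (ν.prod (gaussianReal 0 1)).withDensity
        (fun p => ENNReal.ofReal (Real.exp (p.1 * p.2 - p.1 ^ 2 / 2))) := by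
  ext s hs
  rw [Measure.map_apply (by fun_prop) hs,
    Measure.prod_apply (measurable_fst.prodMk (by fun_prop) hs), withDensity_apply _ hs,
    ← lintegral_indicator hs,
    lintegral_prod _ ((by fun_prop : Measurable _).indicator hs).aemeasurable]
  congr with z
  have hsec : MeasurableSet (Prod.mk z ⁻¹' s) := measurable_prodMk_left hs
  calc gaussianReal 0 1 (Prod.mk z ⁻¹' ((fun p : ℝ × ℝ => (p.1, p.1 + p.2)) ⁻¹' s))
      = (gaussianReal 0 1).map (z + ·) (Prod.mk z ⁻¹' s) :=
        (Measure.map_apply (by fun_prop) hsec).symm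
    _ = gaussianReal z 1 (Prod.mk z ⁻¹' s) := by rw [gaussianReal_map_const_add, zero_add]
    _ = _ := by
      rw [gaussianReal_eq_withDensity_exp, withDensity_apply _ hsec, ← lintegral_indicator hsec]
      rfl

lemma measureReal_prod_gaussianReal_setOf_le_mul [IsFiniteMeasure ν] (hν : ∀ᵐ z ∂ν, 0 < z)
    {a : ℝ → ℝ} (ha : Measurable a) :
    (ν.prod (gaussianReal 0 1)).real {p | a p.1 ≤ p.1 * p.2} =
      ∫ z, stdGaussianCDF (-(a z / z)) ∂ν := by
  have hS : MeasurableSet {p : ℝ × ℝ | a p.1 ≤ p.1 * p.2} :=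
    measurableSet_le (by fun_prop) (by fun_prop)
  rw [measureReal_def, Measure.prod_apply hS, ← integral_toReal
    (measurable_measure_prodMk_left hS).aemeasurable (ae_of_all _ fun _ => measure_lt_top _ _)]
  exact integral_congr_ae (hν.mono fun z hz => gaussianReal_real_setOf_le_mul hz (a z))

theorem tradeoff_prod_gaussianReal_map_shear [IsProbabilityMeasure ν] (hν : ∀ᵐ z ∂ν, 0 < z)
    (t : ℝ) :
    tradeoff (ν.prod (gaussianReal 0 1))
        ((ν.prod (gaussianReal 0 1)).map fun p : ℝ × ℝ => (p.1, p.1 + p.2))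
        (∫ z, stdGaussianCDF (-(t / z) - z / 2) ∂ν) =
      ∫ z, stdGaussianCDF (t / z - z / 2) ∂ν := by
  have hT : Measurable fun p : ℝ × ℝ => (p.1, p.1 + p.2) := by fun_prop
  have := Measure.isProbabilityMeasure_map (μ := ν.prod (gaussianReal 0 1)) hT.aemeasurable
  set S := {p : ℝ × ℝ | t + p.1 ^ 2 / 2 ≤ p.1 * p.2}
  have hS : MeasurableSet S := measurableSet_le (by fun_prop) (by fun_prop)
  have hPS : (ν.prod (gaussianReal 0 1)).real S =
      ∫ z, stdGaussianCDF (-(t / z) - z / 2) ∂ν := by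
    refine (measureReal_prod_gaussianReal_setOf_le_mul ν hν (a := fun z => t + z ^ 2 / 2)
      (by fun_prop)).trans (integral_congr_ae (hν.mono fun z hz => ?_))
    beta_reduce
    congr 1
    field_simp
    ring
  have hQS : ((ν.prod (gaussianReal 0 1)).map fun p : ℝ × ℝ => (p.1, p.1 + p.2)).real S =
      1 - ∫ z, stdGaussianCDF (t / z - z / 2) ∂ν := by
    have hpre : (fun p : ℝ × ℝ => (p.1, p.1 + p.2)) ⁻¹' S =
        {p | t - p.1 ^ 2 / 2 ≤ p.1 * p.2} := by
      ext p
      simp only [S, mem_preimage, mem_ofPred_eq]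
      constructor <;> intro h <;> linarith
    rw [map_measureReal_apply hT hS, hpre,
      measureReal_prod_gaussianReal_setOf_le_mul ν hν (a := fun z => t - z ^ 2 / 2) (by fun_prop)]
    calc ∫ z, stdGaussianCDF (-((t - z ^ 2 / 2) / z)) ∂ν
        = ∫ z, (1 - stdGaussianCDF (t / z - z / 2)) ∂ν := by
          refine integral_congr_ae (hν.mono fun z hz => ?_)
          beta_reduce
          rw [← stdGaussianCDF_neg]
          congr 1
          field_simp
      _ = 1 - ∫ z, stdGaussianCDF (t / z - z / 2) ∂ν := by
          rw [integral_sub (integrable_const 1)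
            (integrable_of_forall_mem_Icc (by fun_prop) fun _ => stdGaussianCDF_mem_Icc _)]
          simp
  have hL : Measurable fun p : ℝ × ℝ => (Real.exp (p.1 * p.2 - p.1 ^ 2 / 2)).toNNReal := by
    fun_prop
  rw [← hPS, tradeoff_measureReal_eq_of_likelihoodRatio hL (map_shear_prod_gaussianReal ν) hS
    (Real.exp_pos t).le, hQS, sub_sub_cancel]
  · intro p hp
    rw [Real.coe_toNNReal _ (Real.exp_pos _).le, Real.exp_le_exp]
    linarith [show t + p.1 ^ 2 / 2 ≤ p.1 * p.2 from hp]
  · intro p hp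
    rw [Real.coe_toNNReal _ (Real.exp_pos _).le, Real.exp_le_exp]
    linarith [not_le.1 (show ¬ t + p.1 ^ 2 / 2 ≤ p.1 * p.2 from hp)]

end ShearedGaussianPair

/-- with `P = law(Z, G)` and `Q = law(Z, Z + G)` (`G ~ N(0,1)` independent of
`Z > 0`), the tradeoff function `f = T(P‖Q)` satisfies `f(α(t)) = β(t)` where
`α(t) = E[Φ(−t/Z − Z/2)]` and `β(t) = E[Φ(t/Z − Z/2)]`. -/
theorem tradeoff_gaussian_parametrization {Ω : Type*} [MeasurableSpace Ω]
    (μ : Measure Ω) [IsProbabilityMeasure μ]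
    (Z G : Ω → ℝ) (hZ : Measurable Z) (hG : Measurable G)
    (hGlaw : μ.map G = gaussianReal 0 1) (hindep : IndepFun Z G μ)
    (hZpos : ∀ᵐ ω ∂μ, 0 < Z ω) :
    ∀ t : ℝ,
      tradeoff (μ.map fun ω => (Z ω, G ω)) (μ.map fun ω => (Z ω, Z ω + G ω))
          (∫ ω, stdGaussianCDF (-(t / Z ω) - Z ω / 2) ∂μ)
        = ∫ ω, stdGaussianCDF (t / Z ω - Z ω / 2) ∂μ := by
  intro t
  have := Measure.isProbabilityMeasure_map (μ := μ) hZ.aemeasurable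
  have hν : ∀ᵐ z ∂μ.map Z, 0 < z := (ae_map_iff hZ.aemeasurable measurableSet_Ioi).2 hZpos
  have hP : μ.map (fun ω => (Z ω, G ω)) = (μ.map Z).prod (gaussianReal 0 1) :=
    hGlaw ▸ (indepFun_iff_map_prod_eq_prod_map_map hZ.aemeasurable hG.aemeasurable).1 hindep
  have hQ : μ.map (fun ω => (Z ω, Z ω + G ω)) =
      ((μ.map Z).prod (gaussianReal 0 1)).map fun p : ℝ × ℝ => (p.1, p.1 + p.2) := by
    rw [← hP, Measure.map_map (by fun_prop) (hZ.prodMk hG)]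
    rfl
  have key := tradeoff_prod_gaussianReal_map_shear (μ.map Z) hν t
  have hα : Measurable fun z : ℝ => stdGaussianCDF (-(t / z) - z / 2) := by fun_prop
  have hβ : Measurable fun z : ℝ => stdGaussianCDF (t / z - z / 2) := by fun_prop
  rwa [integral_map hZ.aemeasurable hα.aestronglyMeasurable,
    integral_map hZ.aemeasurable hβ.aestronglyMeasurable, ← hQ, ← hP] at key
end

section
/- (Gaussian coupling comparison) Let Z and Z̃ be real random variables such that there exists a coupling (Z, Z̃) on a common probability space with Z ≥ Z̃ ≥ 0 almost surely and Z > 0 almost surely. Let G be a standard normal random variable independent of (Z, Z̃). Then T( law(Z, Z + G) ‖ law(Z, G) ) ⪯ T( law(Z̃, Z̃ + G) ‖ law(Z̃, G) ), i.e., for every α ∈ [0,1] the tradeoff function of the pair built from Z is at most that of the pair built from Z̃. -/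
/-!
Given a test `φ` for the pair built from `Z̃`, let `A z̃` be its size conditionally on `Z̃ = z̃`.
For `z̃ ≥ 0` the likelihood ratio of `N(0,1)` to `N(z̃,1)` is decreasing, so by Neyman–Pearson
the lower-tail test `{y | Φ (y - z̃) ≤ A z̃}` (`Φ` the standard normal cdf) has the same
conditional size as `φ` and at least its power. Averaging these tests over the conditional law of
`Z̃` given `Z` gives a test for the pair built from `Z`. Its power is the average power of the
lower-tail tests, hence at least that of `φ`; its size is at most that of `φ`, because under the
null the observation `Z + G` exceeds `Z̃ + G`, and a lower-tail test rejects less often when its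
input moves right.
-/

open MeasureTheory ProbabilityTheory Set Real
open scoped NNReal

section Tests

variable {α β : Type*} [MeasurableSpace α] [MeasurableSpace β]

lemma integrable_of_mem_Icc_s13 {μ : Measure α} [IsFiniteMeasure μ] {f : α → ℝ} (hf : Measurable f)
    (hf01 : ∀ x, f x ∈ Icc (0 : ℝ) 1) : Integrable f μ :=
  .of_bound hf.aestronglyMeasurable 1 <| ae_of_all _ fun x => by
    rw [Real.norm_eq_abs, abs_le]; constructor <;> linarith [(hf01 x).1, (hf01 x).2]

lemma integral_mem_Icc_of_mem_Icc_s13 {μ : Measure α} [IsProbabilityMeasure μ] {f : α → ℝ}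
    (hf : Measurable f) (hf01 : ∀ x, f x ∈ Icc (0 : ℝ) 1) : ∫ x, f x ∂μ ∈ Icc (0 : ℝ) 1 :=
  ⟨integral_nonneg fun x => (hf01 x).1, (integral_mono (integrable_of_mem_Icc_s13 hf hf01)
    (integrable_const 1) fun x => (hf01 x).2).trans_eq (by simp)⟩

lemma tradeoff_le_of_forall_exists_test {P Q : Measure α} [IsProbabilityMeasure Q]
    {P' Q' : Measure β} {a : ℝ} (ha : 0 ≤ a)
    (h : ∀ φ : β → ℝ, Measurable φ → (∀ y, φ y ∈ Icc (0 : ℝ) 1) → ∫ y, φ y ∂P' ≤ a →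
      ∃ ψ : α → ℝ, Measurable ψ ∧ (∀ x, ψ x ∈ Icc (0 : ℝ) 1) ∧ ∫ x, ψ x ∂P ≤ a ∧
        ∫ y, φ y ∂Q' ≤ ∫ x, ψ x ∂Q) :
    tradeoff P Q a ≤ tradeoff P' Q' a := by
  refine le_csInf ⟨1, fun _ => 0, measurable_const, fun _ => ⟨le_rfl, zero_le_one⟩,
    by simpa using ha, by simp⟩ ?_
  rintro _ ⟨φ, hφ, hφ01, hφa, rfl⟩
  obtain ⟨ψ, hψ, hψ01, hψa, hpow⟩ := h φ hφ hφ01 hφa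
  have hbdd : BddBelow {b : ℝ | ∃ ξ : α → ℝ, Measurable ξ ∧ (∀ x, ξ x ∈ Icc (0 : ℝ) 1) ∧
      ∫ x, ξ x ∂P ≤ a ∧ b = 1 - ∫ x, ξ x ∂Q} := by
    refine ⟨0, ?_⟩
    rintro _ ⟨ξ, hξ, hξ01, -, rfl⟩
    linarith [(integral_mem_Icc_of_mem_Icc_s13 (μ := Q) hξ hξ01).2]
  exact (csInf_le hbdd ⟨ψ, hψ, hψ01, hψa, rfl⟩).trans (by linarith)

theorem integral_le_measureReal_of_neymanPearson {P Q : Measure α} [IsFiniteMeasure P]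
    [IsFiniteMeasure Q] {S : Set α} (hS : MeasurableSet S) {c : ℝ≥0}
    (hS_le : c • P.restrict S ≤ Q.restrict S) (hSc_le : Q.restrict Sᶜ ≤ c • P.restrict Sᶜ)
    {f : α → ℝ} (hf : Measurable f) (hf01 : ∀ x, f x ∈ Icc (0 : ℝ) 1)
    (hsize : ∫ x, f x ∂P ≤ P.real S) : ∫ x, f x ∂Q ≤ Q.real S := by
  have hf_int (μ : Measure α) [IsFiniteMeasure μ] : Integrable f μ := integrable_of_mem_Icc_s13 hf hf01
  have hg01 (x : α) : 1 - f x ∈ Icc (0 : ℝ) 1 :=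
    ⟨by linarith [(hf01 x).2], by linarith [(hf01 x).1]⟩
  have hcompl (μ : Measure α) [IsFiniteMeasure μ] :
      ∫ x in S, (1 - f x) ∂μ = μ.real S - ∫ x in S, f x ∂μ := by
    rw [integral_sub (integrable_const 1) (hf_int _), setIntegral_const, smul_eq_mul, mul_one]
  have hQ_out : ∫ x in Sᶜ, f x ∂Q ≤ c * ∫ x in Sᶜ, f x ∂P := by
    simpa [NNReal.smul_def] using
      integral_mono_measure hSc_le (ae_of_all _ fun x => (hf01 x).1) (hf_int _)
  have hQ_in : c * ∫ x in S, (1 - f x) ∂P ≤ ∫ x in S, (1 - f x) ∂Q := by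
    simpa [NNReal.smul_def] using integral_mono_measure hS_le (ae_of_all _ fun x => (hg01 x).1)
      (integrable_of_mem_Icc_s13 (measurable_const.sub hf) hg01)
  have hP_out : ∫ x in Sᶜ, f x ∂P ≤ ∫ x in S, (1 - f x) ∂P := by
    rw [hcompl]
    linarith [integral_add_compl hS (hf_int P)]
  calc ∫ x, f x ∂Q = ∫ x in S, f x ∂Q + ∫ x in Sᶜ, f x ∂Q :=
        (integral_add_compl hS (hf_int Q)).symm
    _ ≤ ∫ x in S, f x ∂Q + c * ∫ x in S, (1 - f x) ∂P := by
      gcongr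
      exact hQ_out.trans (mul_le_mul_of_nonneg_left hP_out c.2)
    _ ≤ ∫ x in S, f x ∂Q + ∫ x in S, (1 - f x) ∂Q := by gcongr
    _ = Q.real S := by rw [hcompl]; ring

end Tests

lemma IsLowerSet.eq_empty_or_eq_univ_or_Iio_subset_subset_Iic {α : Type*}
    [ConditionallyCompleteLinearOrder α] {S : Set α} (hS : IsLowerSet S) :
    S = ∅ ∨ S = univ ∨ ∃ t, Iio t ⊆ S ∧ S ⊆ Iic t := by
  rcases S.eq_empty_or_nonempty with h | hne
  · exact .inl h
  by_cases hbdd : BddAbove S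
  · refine .inr <| .inr ⟨sSup S, fun x hx => ?_, fun x hx => le_csSup hbdd hx⟩
    obtain ⟨s, hs, hxs⟩ := exists_lt_of_lt_csSup hne hx
    exact hS hxs.le hs
  · refine .inr <| .inl <| eq_univ_of_forall fun x => ?_
    obtain ⟨s, hs, hxs⟩ := not_bddAbove_iff.mp hbdd x
    exact hS hxs.le hs

section CDF

variable {μ : Measure ℝ} [IsProbabilityMeasure μ] [NullSingletonClass μ]

lemma continuous_cdf : Continuous (cdf μ) := by
  refine continuous_iff_continuousAt.mpr fun x => ?_
  rw [(monotone_cdf μ).continuousAt_iff_leftLim_eq_rightLim, StieltjesFunction.rightLim_eq]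
  have hx := (cdf μ).measure_singleton x
  rw [measure_cdf, measure_singleton, eq_comm, ENNReal.ofReal_eq_zero, sub_nonpos] at hx
  exact le_antisymm ((monotone_cdf μ).leftLim_le le_rfl) hx

lemma measureReal_setOf_cdf_le {a : ℝ} (ha : a ∈ Icc (0 : ℝ) 1) :
    μ.real {x | cdf μ x ≤ a} = a := by
  have hS : IsLowerSet {x | cdf μ x ≤ a} := fun x y hxy hy => (monotone_cdf μ hxy).trans hy
  rcases hS.eq_empty_or_eq_univ_or_Iio_subset_subset_Iic with h | h | ⟨t, hlt, hle⟩
  · have : a ≤ 0 := ge_of_tendsto' (tendsto_cdf_atBot μ) fun x =>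
      (not_le.mp (eq_empty_iff_forall_notMem.mp h x)).le
    rw [h, measureReal_empty]
    exact (le_antisymm this ha.1).symm
  · have : 1 ≤ a := le_of_tendsto' (tendsto_cdf_atTop μ) (eq_univ_iff_forall.mp h)
    rw [h, probReal_univ]
    exact le_antisymm this ha.2
  · have hclosed : IsClosed {x | cdf μ x ≤ a} := isClosed_le continuous_cdf continuous_const
    have hIic : {x | cdf μ x ≤ a} = Iic t := by
      refine hle.antisymm ?_
      rw [← closure_Iio]
      exact hclosed.closure_subset_iff.mpr hlt
    have hle_a : cdf μ t ≤ a := hIic.ge self_mem_Iic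
    have hge_a : a ≤ cdf μ t := by
      refine ge_of_tendsto (continuous_cdf.continuousAt.mono_left nhdsWithin_le_nhds)
        (eventually_nhdsWithin_of_forall (s := Ioi t) fun s hs => ?_)
      by_contra! h'
      exact not_le.mpr (mem_Ioi.mp hs) (hle h'.le)
    rw [hIic, ← cdf_eq_real]
    exact le_antisymm hle_a hge_a

end CDF

lemma gaussianReal_zero_one_eq_withDensity (m : ℝ) :
    gaussianReal 0 1 =
      (gaussianReal m 1).withDensity fun x => ENNReal.ofReal (exp (m ^ 2 / 2 - m * x)) := by
  rw [gaussianReal_of_var_ne_zero _ one_ne_zero, gaussianReal_of_var_ne_zero _ one_ne_zero,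
    ← withDensity_mul _ (measurable_gaussianPDF _ _) (by fun_prop)]
  congr 1
  ext x
  rw [Pi.mul_apply, gaussianPDF, gaussianPDF, ← ENNReal.ofReal_mul (gaussianPDFReal_nonneg _ _ _)]
  simp only [gaussianPDFReal, NNReal.coe_one, mul_one, sub_zero]
  rw [mul_assoc, ← exp_add]
  congr 3
  ring

lemma smul_restrict_gaussianReal_le {m t : ℝ} (hm : 0 ≤ m) {S : Set ℝ} (hS : MeasurableSet S)
    (hSt : S ⊆ Iic t) :
    (exp (m ^ 2 / 2 - m * t)).toNNReal • (gaussianReal m 1).restrict S ≤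
      (gaussianReal 0 1).restrict S := by
  rw [gaussianReal_zero_one_eq_withDensity m, restrict_withDensity hS, ENNReal.smul_def,
    ← withDensity_const]
  refine withDensity_mono ?_
  filter_upwards [ae_restrict_mem hS] with x hx
  exact ENNReal.ofReal_le_ofReal (exp_le_exp.mpr (by nlinarith [mem_Iic.mp (hSt hx)]))

lemma restrict_gaussianReal_le_smul {m t : ℝ} (hm : 0 ≤ m) {S : Set ℝ} (hS : MeasurableSet S)
    (hSt : S ⊆ Ici t) :
    (gaussianReal 0 1).restrict S ≤
      (exp (m ^ 2 / 2 - m * t)).toNNReal • (gaussianReal m 1).restrict S := by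
  rw [gaussianReal_zero_one_eq_withDensity m, restrict_withDensity hS, ENNReal.smul_def,
    ← withDensity_const]
  refine withDensity_mono ?_
  filter_upwards [ae_restrict_mem hS] with x hx
  exact ENNReal.ofReal_le_ofReal (exp_le_exp.mpr (by nlinarith [mem_Ici.mp (hSt hx)]))

theorem integral_gaussianReal_le_of_isLowerSet {m : ℝ} (hm : 0 ≤ m) {S : Set ℝ}
    (hS : IsLowerSet S) {f : ℝ → ℝ} (hf : Measurable f) (hf01 : ∀ x, f x ∈ Icc (0 : ℝ) 1)
    (hsize : ∫ x, f x ∂gaussianReal m 1 ≤ (gaussianReal m 1).real S) :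
    ∫ x, f x ∂gaussianReal 0 1 ≤ (gaussianReal 0 1).real S := by
  rcases hS.eq_empty_or_eq_univ_or_Iio_subset_subset_Iic with rfl | rfl | ⟨t, hlt, hle⟩
  · rw [measureReal_empty] at hsize ⊢
    have hf0 : f =ᵐ[gaussianReal m 1] 0 := (integral_eq_zero_iff_of_nonneg
      (fun x => (hf01 x).1) (integrable_of_mem_Icc_s13 hf hf01)).mp
        (hsize.antisymm (integral_nonneg fun x => (hf01 x).1))
    have hac : gaussianReal 0 1 ≪ gaussianReal m 1 :=
      (gaussianReal_absolutelyContinuous 0 one_ne_zero).trans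
        (gaussianReal_absolutelyContinuous' m one_ne_zero)
    rw [integral_congr_ae (hac.ae_le hf0)]
    simp
  · rw [probReal_univ]
    exact (integral_mem_Icc_of_mem_Icc_s13 hf hf01).2
  · have hSm : MeasurableSet S := hS.ordConnected.measurableSet
    have hSc : Sᶜ ⊆ Ici t := fun x hx => mem_Ici.mpr <| not_lt.mp fun h => hx (hlt h)
    exact integral_le_measureReal_of_neymanPearson hSm (smul_restrict_gaussianReal_le hm hSm hle)
      (restrict_gaussianReal_le_smul hm hSm.compl hSc) hf hf01 hsize

theorem integral_gaussianReal_le_measureReal_cdf {m : ℝ} (hm : 0 ≤ m) {f : ℝ → ℝ}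
    (hf : Measurable f) (hf01 : ∀ x, f x ∈ Icc (0 : ℝ) 1) :
    ∫ x, f x ∂gaussianReal 0 1 ≤ (gaussianReal 0 1).real
      {x | cdf (gaussianReal 0 1) (x - m) ≤ ∫ y, f (m + y) ∂gaussianReal 0 1} := by
  have := nullSingletonClass_gaussianReal (μ := 0) one_ne_zero
  set a := ∫ y, f (m + y) ∂gaussianReal 0 1
  have ha : a ∈ Icc (0 : ℝ) 1 :=
    integral_mem_Icc_of_mem_Icc_s13 (hf.comp (measurable_const_add m)) fun _ => hf01 _
  have hshift : gaussianReal m 1 = (gaussianReal 0 1).map (m + ·) := by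
    rw [gaussianReal_map_const_add, zero_add]
  set S := {x | cdf (gaussianReal 0 1) (x - m) ≤ a}
  have hSm : MeasurableSet S :=
    measurableSet_le ((monotone_cdf _).measurable.comp (measurable_id.sub_const m))
      measurable_const
  have hS : IsLowerSet S := fun x y hxy hy => (monotone_cdf _ (by linarith)).trans hy
  -- `x ↦ Φ (x - m)` is uniformly distributed under `N(m, 1)`, so `S` has size exactly `a`.
  refine integral_gaussianReal_le_of_isLowerSet hm hS hf hf01 (le_of_eq ?_)
  rw [hshift, integral_map (measurable_const_add m).aemeasurable hf.aestronglyMeasurable,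
    map_measureReal_apply (measurable_const_add m) hSm]
  have hpre : (m + ·) ⁻¹' S = {x | cdf (gaussianReal 0 1) x ≤ a} := by
    ext x
    simp [S]
  rw [hpre, measureReal_setOf_cdf_le ha]

section CondKernelTest

variable {α β γ δ : Type*} [MeasurableSpace α] [MeasurableSpace β] [StandardBorelSpace β]
  [Nonempty β]

noncomputable def condKernelTest (ρ : Measure (α × β)) [IsFiniteMeasure ρ] (V : Set (β × γ))
    (q : α × γ) : ℝ :=
  (ρ.condKernel q.1).real {b | (b, q.2) ∈ V}

variable {ρ : Measure (α × β)} [IsFiniteMeasure ρ] {V : Set (β × γ)}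

lemma condKernelTest_mem_Icc (q : α × γ) : condKernelTest ρ V q ∈ Icc (0 : ℝ) 1 :=
  ⟨measureReal_nonneg, measureReal_le_one⟩

variable [MeasurableSpace γ] [MeasurableSpace δ]

lemma measurable_condKernel_apply_setOf (hV : MeasurableSet V) :
    Measurable fun q : α × γ => ρ.condKernel q.1 {b | (b, q.2) ∈ V} :=
  Kernel.measurable_kernel_prodMk_left (κ := Kernel.prodMkRight γ ρ.condKernel)
    (measurable_snd.prodMk measurable_fst.snd hV)

lemma measurable_condKernelTest (hV : MeasurableSet V) : Measurable (condKernelTest ρ V) :=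
  (measurable_condKernel_apply_setOf hV).ennreal_toReal

theorem integral_condKernelTest_comp {ν : Measure δ} [IsFiniteMeasure ν] (hV : MeasurableSet V)
    {T : α × δ → γ} (hT : Measurable T) :
    ∫ x, condKernelTest ρ V (x.1, T x) ∂(ρ.fst.prod ν) =
      ∫ p, ν.real {g | (p.2, T (p.1, g)) ∈ V} ∂ρ := by
  have hW : MeasurableSet {y : (α × β) × δ | (y.1.2, T (y.1.1, y.2)) ∈ V} :=
    hV.preimage (by fun_prop)
  have hκ : Measurable fun x : α × δ => ρ.condKernel x.1 {b | (b, T x) ∈ V} :=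
    (measurable_condKernel_apply_setOf hV).comp (measurable_fst.prodMk hT)
  have hν : Measurable fun p : α × β => ν {g | (p.2, T (p.1, g)) ∈ V} :=
    measurable_measure_prodMk_left hW
  have key : ∫⁻ x, ρ.condKernel x.1 {b | (b, T x) ∈ V} ∂(ρ.fst.prod ν) =
      ∫⁻ p, ν {g | (p.2, T (p.1, g)) ∈ V} ∂ρ := by
    calc ∫⁻ x, ρ.condKernel x.1 {b | (b, T x) ∈ V} ∂(ρ.fst.prod ν)
        = ∫⁻ a, ∫⁻ g, ρ.condKernel a {b | (b, T (a, g)) ∈ V} ∂ν ∂ρ.fst :=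
          lintegral_prod _ hκ.aemeasurable
      _ = ∫⁻ a, ∫⁻ b, ν {g | (b, T (a, g)) ∈ V} ∂ρ.condKernel a ∂ρ.fst := by
          refine lintegral_congr fun a => ?_
          have hWa : MeasurableSet {z : δ × β | (z.2, T (a, z.1)) ∈ V} :=
            hV.preimage (by fun_prop)
          exact (Measure.prod_apply hWa).symm.trans (Measure.prod_apply_symm hWa)
      _ = ∫⁻ p, ν {g | (p.2, T (p.1, g)) ∈ V} ∂(ρ.fst ⊗ₘ ρ.condKernel) :=
          (Measure.lintegral_compProd hν).symm
      _ = ∫⁻ p, ν {g | (p.2, T (p.1, g)) ∈ V} ∂ρ := by rw [Measure.disintegrate]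
  simp only [condKernelTest, measureReal_def]
  rw [integral_toReal hκ.aemeasurable (ae_of_all _ fun _ => measure_lt_top _ _),
    integral_toReal hν.aemeasurable (ae_of_all _ fun _ => measure_lt_top _ _), key]

end CondKernelTest

noncomputable def gaussianShiftPair (ν : Measure ℝ) : Measure (ℝ × ℝ) :=
  (ν.prod (gaussianReal 0 1)).map fun q => (q.1, q.1 + q.2)

/-- The slice at `z` is the lower-tail test of `N(z, 1)` against `N(0, 1)` whose size is that
of `φ (z, ·)`. -/
noncomputable def neymanPearsonRegion (φ : ℝ × ℝ → ℝ) : Set (ℝ × ℝ) :=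
  {q | cdf (gaussianReal 0 1) (q.2 - q.1) ≤ ∫ g, φ (q.1, q.1 + g) ∂gaussianReal 0 1}

lemma measurable_integral_shift {φ : ℝ × ℝ → ℝ} (hφ : Measurable φ) :
    Measurable fun z => ∫ g, φ (z, z + g) ∂gaussianReal 0 1 := by
  have hφ_shift : Measurable fun x : ℝ × ℝ => φ (x.1, x.1 + x.2) := hφ.comp (by fun_prop)
  exact hφ_shift.stronglyMeasurable.integral_prod_right'.measurable

lemma measurableSet_neymanPearsonRegion {φ : ℝ × ℝ → ℝ} (hφ : Measurable φ) :
    MeasurableSet (neymanPearsonRegion φ) :=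
  measurableSet_le ((monotone_cdf _).measurable.comp (measurable_snd.sub measurable_fst))
    ((measurable_integral_shift hφ).comp measurable_fst)

lemma measureReal_neymanPearsonRegion_le {φ : ℝ × ℝ → ℝ} (hφ : Measurable φ)
    (hφ01 : ∀ q, φ q ∈ Icc (0 : ℝ) 1) {z z' : ℝ} (hz : z' ≤ z) :
    (gaussianReal 0 1).real {g | (z', z + g) ∈ neymanPearsonRegion φ} ≤
      ∫ g, φ (z', z' + g) ∂gaussianReal 0 1 := by
  have := nullSingletonClass_gaussianReal (μ := 0) one_ne_zero
  have ha : ∫ g, φ (z', z' + g) ∂gaussianReal 0 1 ∈ Icc (0 : ℝ) 1 :=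
    integral_mem_Icc_of_mem_Icc_s13 (hφ.comp (measurable_const.prodMk (measurable_const_add z')))
      fun _ => hφ01 _
  refine (measureReal_mono fun g hg => ?_).trans_eq (measureReal_setOf_cdf_le ha)
  exact (monotone_cdf _ (by linarith)).trans hg

theorem tradeoff_gaussianShiftPair_fst_le_snd {ρ : Measure (ℝ × ℝ)} [IsProbabilityMeasure ρ]
    (hρ : ∀ᵐ p ∂ρ, 0 ≤ p.2 ∧ p.2 ≤ p.1) {a : ℝ} (ha : 0 ≤ a) :
    tradeoff (gaussianShiftPair ρ.fst) (ρ.fst.prod (gaussianReal 0 1)) a ≤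
      tradeoff (gaussianShiftPair ρ.snd) (ρ.snd.prod (gaussianReal 0 1)) a := by
  refine tradeoff_le_of_forall_exists_test ha fun φ hφ hφ01 hsize => ?_
  set N := gaussianReal 0 1
  set V := neymanPearsonRegion φ
  have hV : MeasurableSet V := measurableSet_neymanPearsonRegion hφ
  have hφ_shift : Measurable fun x : ℝ × ℝ => φ (x.1, x.1 + x.2) := hφ.comp (by fun_prop)
  have hA := measurable_integral_shift hφ
  refine ⟨condKernelTest ρ V, measurable_condKernelTest hV, condKernelTest_mem_Icc, ?_, ?_⟩
  · calc ∫ x, condKernelTest ρ V x ∂gaussianShiftPair ρ.fst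
        = ∫ p, N.real {g | (p.2, p.1 + g) ∈ V} ∂ρ := by
          rw [gaussianShiftPair, integral_map (by fun_prop)
            (measurable_condKernelTest hV).aestronglyMeasurable]
          exact integral_condKernelTest_comp hV (by fun_prop)
      _ ≤ ∫ p, ∫ g, φ (p.2, p.2 + g) ∂N ∂ρ :=
          integral_mono_of_nonneg (ae_of_all _ fun _ => measureReal_nonneg)
            (integrable_of_mem_Icc_s13 (hA.comp measurable_snd) fun _ =>
              integral_mem_Icc_of_mem_Icc_s13 (hφ_shift.comp measurable_prodMk_left) fun _ => hφ01 _)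
            (hρ.mono fun _ hp => measureReal_neymanPearsonRegion_le hφ hφ01 hp.2)
      _ = ∫ x, φ x ∂gaussianShiftPair ρ.snd := by
          rw [gaussianShiftPair, integral_map (by fun_prop) hφ.aestronglyMeasurable,
            integral_prod _ (integrable_of_mem_Icc_s13 hφ_shift fun _ => hφ01 _), Measure.snd,
            integral_map measurable_snd.aemeasurable hA.aestronglyMeasurable]
      _ ≤ a := hsize
  · have hV_slice : Integrable (fun p : ℝ × ℝ => N.real {g | (p.2, g) ∈ V}) ρ :=
      integrable_of_mem_Icc_s13 (measurable_measure_prodMk_left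
        (hV.preimage (measurable_fst.snd.prodMk measurable_snd))).ennreal_toReal
        fun _ => ⟨measureReal_nonneg, measureReal_le_one⟩
    calc ∫ x, φ x ∂ρ.snd.prod N
        = ∫ p, ∫ g, φ (p.2, g) ∂N ∂ρ := by
          rw [integral_prod _ (integrable_of_mem_Icc_s13 hφ hφ01), Measure.snd,
            integral_map measurable_snd.aemeasurable
              hφ.stronglyMeasurable.integral_prod_right'.aestronglyMeasurable]
      _ ≤ ∫ p, N.real {g | (p.2, g) ∈ V} ∂ρ :=
          integral_mono_of_nonneg (ae_of_all _ fun _ => integral_nonneg fun _ => (hφ01 _).1)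
            hV_slice (hρ.mono fun _ hp => integral_gaussianReal_le_measureReal_cdf hp.1
              (hφ.comp measurable_prodMk_left) fun _ => hφ01 _)
      _ = ∫ x, condKernelTest ρ V x ∂ρ.fst.prod N :=
          (integral_condKernelTest_comp hV measurable_snd).symm

lemma map_prodMk_eq_prod_of_indepFun {Ω E F : Type*} [MeasurableSpace Ω] [MeasurableSpace E]
    [MeasurableSpace F] {μ : Measure Ω} [IsFiniteMeasure μ] {X : Ω → E} {G : Ω → F}
    (hX : Measurable X) (hG : Measurable G) {ν : Measure F} (hGlaw : μ.map G = ν)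
    (hXG : IndepFun X G μ) :
    μ.map (fun ω => (X ω, G ω)) = (μ.map X).prod ν :=
  hGlaw ▸ (indepFun_iff_map_prod_eq_prod_map_map hX.aemeasurable hG.aemeasurable).mp hXG

lemma map_prodMk_add_eq_gaussianShiftPair {Ω : Type*} [MeasurableSpace Ω] {μ : Measure Ω}
    [IsFiniteMeasure μ] {X G : Ω → ℝ} (hX : Measurable X) (hG : Measurable G)
    (hGlaw : μ.map G = gaussianReal 0 1) (hXG : IndepFun X G μ) :
    μ.map (fun ω => (X ω, X ω + G ω)) = gaussianShiftPair (μ.map X) := by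
  rw [gaussianShiftPair, ← map_prodMk_eq_prod_of_indepFun hX hG hGlaw hXG,
    Measure.map_map (by fun_prop) (hX.prodMk hG)]
  rfl

theorem tradeoff_gaussian_coupling_general {Ω : Type*} [MeasurableSpace Ω]
    (μ : Measure Ω) [IsProbabilityMeasure μ]
    (Z Zt G : Ω → ℝ) (hZ : Measurable Z) (hZt : Measurable Zt) (hG : Measurable G)
    (hord : ∀ᵐ ω ∂μ, 0 ≤ Zt ω ∧ Zt ω ≤ Z ω)
    (hGlaw : μ.map G = gaussianReal 0 1)
    (hindep : IndepFun (fun ω => (Z ω, Zt ω)) G μ) :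
    ∀ α ∈ Set.Icc (0 : ℝ) 1,
      tradeoff (μ.map fun ω => (Z ω, Z ω + G ω)) (μ.map fun ω => (Z ω, G ω)) α
        ≤ tradeoff (μ.map fun ω => (Zt ω, Zt ω + G ω)) (μ.map fun ω => (Zt ω, G ω)) α := by
  intro α hα
  have hZZt : Measurable fun ω => (Z ω, Zt ω) := hZ.prodMk hZt
  have hZG : IndepFun Z G μ := hindep.comp measurable_fst measurable_id
  have hZtG : IndepFun Zt G μ := hindep.comp measurable_snd measurable_id
  have hρ : ∀ᵐ p ∂μ.map (fun ω => (Z ω, Zt ω)), 0 ≤ p.2 ∧ p.2 ≤ p.1 :=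
    (ae_map_iff hZZt.aemeasurable (measurableSet_le measurable_const measurable_snd |>.inter
      (measurableSet_le measurable_snd measurable_fst))).mpr hord
  have := Measure.isProbabilityMeasure_map (μ := μ) hZZt.aemeasurable
  have key := tradeoff_gaussianShiftPair_fst_le_snd hρ hα.1
  rwa [Measure.fst_map_prodMk hZt, Measure.snd_map_prodMk hZ,
    ← map_prodMk_eq_prod_of_indepFun hZ hG hGlaw hZG,
    ← map_prodMk_eq_prod_of_indepFun hZt hG hGlaw hZtG,
    ← map_prodMk_add_eq_gaussianShiftPair hZ hG hGlaw hZG,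
    ← map_prodMk_add_eq_gaussianShiftPair hZt hG hGlaw hZtG] at key

/-- Gaussian coupling comparison: if `Z ≥ Z̃ ≥ 0` a.s. with `Z > 0` a.s. and
`G ~ N(0,1)` independent of `(Z, Z̃)`, then
`T(law(Z, Z+G) ‖ law(Z, G)) ⪯ T(law(Z̃, Z̃+G) ‖ law(Z̃, G))` on `[0,1]`. -/
theorem tradeoff_gaussian_coupling {Ω : Type*} [MeasurableSpace Ω]
    (μ : Measure Ω) [IsProbabilityMeasure μ]
    (Z Zt G : Ω → ℝ) (hZ : Measurable Z) (hZt : Measurable Zt) (hG : Measurable G)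
    (hord : ∀ᵐ ω ∂μ, 0 ≤ Zt ω ∧ Zt ω ≤ Z ω) (hZpos : ∀ᵐ ω ∂μ, 0 < Z ω)
    (hGlaw : μ.map G = gaussianReal 0 1)
    (hindep : IndepFun (fun ω => (Z ω, Zt ω)) G μ) :
    ∀ α ∈ Set.Icc (0 : ℝ) 1,
      tradeoff (μ.map fun ω => (Z ω, Z ω + G ω)) (μ.map fun ω => (Z ω, G ω)) α
        ≤ tradeoff (μ.map fun ω => (Zt ω, Zt ω + G ω)) (μ.map fun ω => (Zt ω, G ω)) α :=
  tradeoff_gaussian_coupling_general μ Z Zt G hZ hZt hG hord hGlaw hindep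
end

section
/- (Mapping lemma underlying the Gaussian coupling comparison) Let (Z, Z̃) be a pair of real random variables on a common probability space with Z ≥ Z̃ ≥ 0 and Z > 0 almost surely, and let G and G' be standard normal random variables, with G independent of (Z, Z̃) and G' independent of everything else. Define the randomized map M(z, a) = (z̃, (z̃/z)·a + √(1 − (z̃/z)²)·G'), where z̃ is sampled from the conditional distribution of Z̃ given Z = z. Then M applied to (Z, Z + G) has the same law as (Z̃, Z̃ + H) and M applied to (Z, G) has the same law as (Z̃, H), where H is a standard normal random variable independent of Z̃. -/
/-!
For `z > 0` and `z̃ ∈ [0, z]` put `c = z̃ / z`. If `a` and `G'` are independent standard normals,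
then `c a + √(1 - c²) G'` is again standard normal (a sum of independent centred Gaussians with
variances `c²` and `1 - c²`), whatever `z̃` is. Hence `M` sends `law(Z) ⊗ N(0,1)` to
`law(Z̃) ⊗ N(0,1)`. Moreover `M` commutes with the shear `(z, a) ↦ (z, z + a)`, because
`(z̃ / z) (z + a) = z̃ + (z̃ / z) a`; this transports the identity for `(Z, G)` to `(Z, Z + G)`.
-/

open MeasureTheory ProbabilityTheory

namespace ProbabilityTheory.Kernel

variable {α β γ : Type*} [MeasurableSpace α] [MeasurableSpace β] [MeasurableSpace γ]

lemma measurable_map_prodMk_left (κ : Kernel α β) [IsSFiniteKernel κ] {F : α × β → γ}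
    (hF : Measurable F) : Measurable fun a => (κ a).map fun b => F (a, b) := by
  refine Measure.measurable_of_measurable_coe _ fun u hu => ?_
  have hsection : ∀ a, ((κ a).map fun b => F (a, b)) u = κ a (Prod.mk a ⁻¹' (F ⁻¹' u)) :=
    fun a => Measure.map_apply (hF.comp measurable_prodMk_left) hu
  simpa only [hsection] using measurable_kernel_prodMk_left (hF hu)

end ProbabilityTheory.Kernel

namespace MeasureTheory.Measure

variable {α β γ : Type*} [MeasurableSpace α] [MeasurableSpace β] [MeasurableSpace γ]

lemma bind_map_prodMk_left (μ : Measure α) (ν : Measure β) [SFinite ν] {F : α × β → γ}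
    (hF : Measurable F) : μ.bind (fun a => ν.map fun b => F (a, b)) = (μ.prod ν).map F := by
  have hmeas : Measurable fun a => ν.map fun b => F (a, b) :=
    (Kernel.const α ν).measurable_map_prodMk_left hF
  ext u hu
  rw [bind_apply hu hmeas.aemeasurable, map_apply hF hu, prod_apply (hF hu)]
  exact lintegral_congr fun a => map_apply (by fun_prop) hu

lemma map_prodMk_eq_prod_of_ae_map_eq (μ : Measure α) [SigmaFinite μ] (ν : Measure β) [SFinite ν]
    {ξ : Measure γ} [SigmaFinite ξ] {F : α × β → γ} (hF : Measurable F)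
    (h : ∀ᵐ a ∂μ, ν.map (fun b => F (a, b)) = ξ) :
    (μ.prod ν).map (fun p => (p.1, F p)) = μ.prod ξ := by
  have hG : Measurable fun p : α × β => (p.1, F p) := measurable_fst.prodMk hF
  refine (prod_eq fun s t hs ht => ?_).symm
  rw [map_apply hG (hs.prod ht), prod_apply (hG (hs.prod ht)), mul_comm,
    ← lintegral_indicator_const hs]
  refine lintegral_congr_ae ?_
  filter_upwards [h] with a ha
  by_cases has : a ∈ s
  · rw [Set.indicator_of_mem has, ← ha, map_apply (by fun_prop) ht]
    congr 1
    ext b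
    simp [has]
  · rw [Set.indicator_of_notMem has]
    convert measure_empty (μ := ν)
    ext b
    simp [has]

lemma bind_map_eq_map_bind {α' β' : Type*} [MeasurableSpace α'] [MeasurableSpace β']
    {μ : Measure α} {f : α → α'} {g : β → β'} {κ : α' → Measure β'} {η : α → Measure β}
    (hf : Measurable f) (hg : Measurable g) (hκ : Measurable κ) (hη : Measurable η)
    (h : ∀ᵐ a ∂μ, κ (f a) = (η a).map g) :
    (μ.map f).bind κ = (μ.bind η).map g := by
  ext u hu
  rw [map_apply hg hu, bind_apply (hg hu) hη.aemeasurable, bind_apply hu hκ.aemeasurable,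
    lintegral_map (f := fun a' => κ a' u) ((measurable_coe hu).comp hκ) hf]
  refine lintegral_congr_ae ?_
  filter_upwards [h] with a ha
  rw [ha, map_apply hg hu]

end MeasureTheory.Measure

open Measure

lemma gaussianReal_map_mul_add_mul {c s : ℝ} (h : c ^ 2 + s ^ 2 = 1) :
    ((gaussianReal 0 1).prod (gaussianReal 0 1)).map (fun q => c * q.1 + s * q.2)
      = gaussianReal 0 1 := by
  have hsplit : (fun q : ℝ × ℝ => c * q.1 + s * q.2)
      = (fun q => q.1 + q.2) ∘ Prod.map (c * ·) (s * ·) := rfl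
  rw [hsplit, ← map_map (by fun_prop) (by fun_prop),
    ← map_prod_map _ _ (by fun_prop) (by fun_prop), gaussianReal_map_const_mul,
    gaussianReal_map_const_mul, ← conv, gaussianReal_conv_gaussianReal]
  congr
  · simp
  · ext; simp [h]

lemma bind_gaussianReal_map_prod_mul_add_sqrt {X : Type*} [MeasurableSpace X] (ρ : Measure X)
    [SigmaFinite ρ] {f : X → ℝ} (hf : Measurable f) (h : ∀ᵐ x ∂ρ, f x ^ 2 ≤ 1) :
    (gaussianReal 0 1).bind (fun a => (ρ.prod (gaussianReal 0 1)).map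
        fun q => (q.1, f q.1 * a + √(1 - f q.1 ^ 2) * q.2))
      = ρ.prod (gaussianReal 0 1) := by
  set γ := gaussianReal 0 1
  have hrearrange : (γ.prod (ρ.prod γ)).map (fun p => (p.2.1, (p.2.2, p.1)))
      = ρ.prod (γ.prod γ) :=
    ((measurePreserving_prodAssoc ρ γ γ).comp measurePreserving_swap).map_eq
  have hfibre : ∀ᵐ x ∂ρ, (γ.prod γ).map (fun q => f x * q.2 + √(1 - f x ^ 2) * q.1) = γ := by
    filter_upwards [h] with x hx
    rw [← prod_swap, map_map (by fun_prop) measurable_swap]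
    exact gaussianReal_map_mul_add_mul (by rw [Real.sq_sqrt (by linarith)]; ring)
  calc γ.bind (fun a => (ρ.prod γ).map fun q => (q.1, f q.1 * a + √(1 - f q.1 ^ 2) * q.2))
      = (γ.prod (ρ.prod γ)).map
          (fun p => (p.2.1, f p.2.1 * p.1 + √(1 - f p.2.1 ^ 2) * p.2.2)) :=
        bind_map_prodMk_left γ (ρ.prod γ)
          (F := fun p => (p.2.1, f p.2.1 * p.1 + √(1 - f p.2.1 ^ 2) * p.2.2)) (by fun_prop)
    _ = ((γ.prod (ρ.prod γ)).map (fun p => (p.2.1, (p.2.2, p.1)))).map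
          (fun p => (p.1, f p.1 * p.2.2 + √(1 - f p.1 ^ 2) * p.2.1)) := by
        rw [map_map (by fun_prop) (by fun_prop)]
        rfl
    _ = ρ.prod γ := by
        rw [hrearrange, map_prodMk_eq_prod_of_ae_map_eq ρ (γ.prod γ) (by fun_prop) hfibre]

noncomputable def gaussianCouplingMap (ν : Kernel ℝ ℝ) (p : ℝ × ℝ) : Measure (ℝ × ℝ) :=
  ((ν p.1).prod (gaussianReal 0 1)).map
    fun q => (q.1, q.1 / p.1 * p.2 + √(1 - (q.1 / p.1) ^ 2) * q.2)

section gaussianCouplingMap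

variable (ν : Kernel ℝ ℝ)

lemma measurable_gaussianCouplingMap [IsSFiniteKernel ν] :
    Measurable (gaussianCouplingMap ν) := by
  unfold gaussianCouplingMap
  simpa [Kernel.prod_apply] using Kernel.measurable_map_prodMk_left
    ((ν ×ₖ Kernel.const ℝ (gaussianReal 0 1)).comap Prod.fst measurable_fst)
    (F := fun r : (ℝ × ℝ) × (ℝ × ℝ) =>
      (r.2.1, r.2.1 / r.1.1 * r.1.2 + √(1 - (r.2.1 / r.1.1) ^ 2) * r.2.2)) (by fun_prop)

lemma gaussianCouplingMap_shear {p : ℝ × ℝ} (hp : p.1 ≠ 0) :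
    gaussianCouplingMap ν (p.1, p.1 + p.2)
      = (gaussianCouplingMap ν p).map fun q => (q.1, q.1 + q.2) := by
  rw [gaussianCouplingMap, gaussianCouplingMap, map_map (by fun_prop) (by fun_prop)]
  congr 1
  ext q
  · rfl
  · simp only [Function.comp_apply]
    field_simp
    ring

lemma prod_gaussianReal_bind_gaussianCouplingMap [IsFiniteKernel ν] (α : Measure ℝ)
    [IsFiniteMeasure α] (hν : ∀ᵐ z ∂α, ∀ᵐ x ∂ν z, (x / z) ^ 2 ≤ 1) :
    (α.prod (gaussianReal 0 1)).bind (gaussianCouplingMap ν)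
      = (ν ∘ₘ α).prod (gaussianReal 0 1) := by
  have hM := measurable_gaussianCouplingMap ν
  refine (prod_eq fun s t hs ht => ?_).symm
  rw [bind_apply (hs.prod ht) hM.aemeasurable,
    lintegral_prod (fun p => gaussianCouplingMap ν p (s ×ˢ t))
      ((measurable_coe (hs.prod ht)).comp hM).aemeasurable,
    bind_apply hs ν.aemeasurable, ← lintegral_mul_const _ (ν.measurable_coe hs)]
  refine lintegral_congr_ae ?_
  filter_upwards [hν] with z hz
  rw [← bind_apply (f := fun a => gaussianCouplingMap ν (z, a)) (hs.prod ht)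
      (hM.comp measurable_prodMk_left).aemeasurable, ← prod_prod]
  exact congrArg (· (s ×ˢ t)) (bind_gaussianReal_map_prod_mul_add_sqrt (ν z) (by fun_prop) hz)

end gaussianCouplingMap

/-- Mapping lemma underlying the Gaussian coupling comparison:
with `ν` the conditional distribution of `Z̃` given `Z` (i.e. `law(Z, Z̃) = law(Z) ⊗ₘ ν`),
the randomized map `M(z, a) = (z̃, (z̃/z)·a + √(1 − (z̃/z)²)·G')`, `z̃ ~ ν(z)`, `G' ~ N(0,1)`,
sends `law(Z, Z+G)` to `law(Z̃, Z̃+H)` and `law(Z, G)` to `law(Z̃, H)`,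
where `H ~ N(0,1)` is independent of `Z̃`. -/
theorem gaussian_coupling_map {Ω : Type*} [MeasurableSpace Ω]
    (μ : Measure Ω) [IsProbabilityMeasure μ]
    (Z Zt G : Ω → ℝ) (hZ : Measurable Z) (hZt : Measurable Zt) (hG : Measurable G)
    (hord : ∀ᵐ ω ∂μ, 0 ≤ Zt ω ∧ Zt ω ≤ Z ω) (hZpos : ∀ᵐ ω ∂μ, 0 < Z ω)
    (hGlaw : μ.map G = gaussianReal 0 1)
    (hindep : IndepFun (fun ω => (Z ω, Zt ω)) G μ)
    (ν : Kernel ℝ ℝ) [IsMarkovKernel ν]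
    (hcond : μ.map (fun ω => (Z ω, Zt ω)) = (μ.map Z) ⊗ₘ ν)
    (M : ℝ × ℝ → Measure (ℝ × ℝ))
    (hM : M = fun p => ((ν p.1).prod (gaussianReal 0 1)).map
        (fun q => (q.1, q.1 / p.1 * p.2 + Real.sqrt (1 - (q.1 / p.1) ^ 2) * q.2))) :
    (μ.map fun ω => (Z ω, Z ω + G ω)).bind M
        = ((μ.map Zt).prod (gaussianReal 0 1)).map (fun p => (p.1, p.1 + p.2)) ∧
      (μ.map fun ω => (Z ω, G ω)).bind M = (μ.map Zt).prod (gaussianReal 0 1) := by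
  replace hM : M = gaussianCouplingMap ν := hM
  subst hM
  have hZG : μ.map (fun ω => (Z ω, G ω)) = (μ.map Z).prod (gaussianReal 0 1) := by
    rw [(indepFun_iff_map_prod_eq_prod_map_map hZ.aemeasurable hG.aemeasurable).mp
      (hindep.comp measurable_fst measurable_id), hGlaw]
  have hZt_law : μ.map Zt = ν ∘ₘ μ.map Z := by
    rw [← snd_map_prodMk hZ, hcond, snd_compProd]
  have hZ_pos : ∀ᵐ z ∂μ.map Z, 0 < z := (ae_map_iff hZ.aemeasurable measurableSet_Ioi).mpr hZpos
  have hZt_mem : ∀ᵐ p ∂(μ.map Z ⊗ₘ ν), 0 ≤ p.2 ∧ p.2 ≤ p.1 := by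
    rw [← hcond]
    exact (ae_map_iff (hZ.prodMk hZt).aemeasurable (measurableSet_le measurable_const
      measurable_snd |>.inter (measurableSet_le measurable_snd measurable_fst))).mpr hord
  have hratio : ∀ᵐ z ∂μ.map Z, ∀ᵐ x ∂ν z, (x / z) ^ 2 ≤ 1 := by
    filter_upwards [hZ_pos, ae_ae_of_ae_compProd hZt_mem] with z hz hzt
    filter_upwards [hzt] with x hx
    exact pow_le_one₀ (div_nonneg hx.1 hz.le) ((div_le_one hz).mpr hx.2)
  have hbind := prod_gaussianReal_bind_gaussianCouplingMap ν (μ.map Z) hratio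
  refine ⟨?_, by rw [hZG, hbind, hZt_law]⟩
  have hshear : Measurable fun p : ℝ × ℝ => (p.1, p.1 + p.2) := by fun_prop
  rw [show (fun ω => (Z ω, Z ω + G ω)) = (fun p => (p.1, p.1 + p.2)) ∘ fun ω => (Z ω, G ω)
    from rfl, ← map_map hshear (hZ.prodMk hG), hZG, hZt_law, ← hbind]
  refine bind_map_eq_map_bind hshear hshear (measurable_gaussianCouplingMap ν)
    (measurable_gaussianCouplingMap ν) ?_
  filter_upwards [quasiMeasurePreserving_fst.ae hZ_pos] with p hp
  exact gaussianCouplingMap_shear ν hp.ne'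
end
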